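/- arXiv:2408.16335 — 8 statements merged into one kernel-verified Lean document; each statement's English description precedes it below -/
import Mathlib

section
/- For every complete sparse ruler R of length n − 1 (with n ≥ 1), there exists an alphabet A and an unbordered partial word w of length n over A such that D(w) = R; in fact the partial word v = v₀v₁…v_{n−1} over the alphabet R defined by v_i = i if i ∈ R and v_i = ⋄ otherwise is unbordered with D(v) = R. -/
/-- The domain of a partial word (a list over `Option A`, where `none` is the hole):
the set of positions carrying a letter. -/
def PartialWord.domain {A : Type*} (w : List (Option A)) : Finset ℕ :=
  (Finset.range w.length).filter fun i => (w.getD i none).isSome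

/-- Two partial words are compatible if they have the same length and agree on the
intersection of their domains. -/
def PartialWord.Compatible {A : Type*} (w v : List (Option A)) : Prop :=
  w.length = v.length ∧
    ∀ i ∈ PartialWord.domain w ∩ PartialWord.domain v, w.getD i none = v.getD i none

/-- A partial word is unbordered if no nonempty proper prefix is compatible with a
suffix of the same length. -/
def PartialWord.Unbordered {A : Type*} (w : List (Option A)) : Prop :=
  ∀ x y : List (Option A), x <+: w → y <:+ w → x ≠ [] → x.length < w.length →
    x.length = y.length → ¬ PartialWord.Compatible x y

/-- The number of holes of a partial word. -/
def PartialWord.holes {A : Type*} (w : List (Option A)) : ℕ :=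
  w.countP fun x => x.isNone

/-- `u` repeated `t` times. -/
def listPow {α : Type*} (u : List α) (t : ℕ) : List α := (List.replicate t u).flatten

/-- A complete sparse ruler of length `n`. -/
def IsCompleteRuler (n : ℕ) (R : Finset ℕ) : Prop :=
  (∀ x ∈ R, x ≤ n) ∧ 0 ∈ R ∧ n ∈ R ∧ ∀ d ≤ n, ∃ r ∈ R, ∃ s ∈ R, r = s + d

/-- Minimum number of marks of a complete sparse ruler of length `n`. -/
noncomputable def M1 (n : ℕ) : ℕ :=
  sInf {k | ∃ R : Finset ℕ, IsCompleteRuler n R ∧ R.card = k}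

/-- Maximum number of holes an unbordered partial word of length `n` over an alphabet
of size `k` can have. -/
noncomputable def HB (k n : ℕ) : ℕ :=
  sSup {h | ∃ w : List (Option (Fin k)),
    w.length = n ∧ PartialWord.Unbordered w ∧ PartialWord.holes w = h}

/-- The ruler (set of partial sums) given by a difference representation. -/
def rulerOfDiffs (D : List ℕ) : Finset ℕ :=
  ((List.range (D.length + 1)).map fun t => (D.take t).sum).toFinset

/-- The difference representation of the extended Wichmann ruler `w₁(r,s,i,j)`. -/
def wichmannDiffs (r s i j : ℕ) : List ℕ :=
  List.replicate r 1 ++ [r + 1] ++ List.replicate r (2 * r + 1) ++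
    List.replicate s (4 * r + 3) ++ List.replicate (r + 1) (2 * r + 2) ++
    List.replicate r 1 ++ List.replicate i (r + 1) ++ [j]

/-- A complete two-dimensional sparse ruler: an `(n,m)`-ruler. -/
def IsRuler2 (n m : ℕ) (R : Finset (ℕ × ℕ)) : Prop :=
  (∀ p ∈ R, p.1 < n ∧ p.2 < m) ∧
    ∀ x y : ℤ, |x| ≤ (n : ℤ) - 1 → |y| ≤ (m : ℤ) - 1 →
      ∃ p ∈ R, ∃ q ∈ R, (p.1 : ℤ) - (q.1 : ℤ) = x ∧ (p.2 : ℤ) - (q.2 : ℤ) = y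

/-- Minimum number of marks of an `(n,m)`-ruler. -/
noncomputable def M2 (n m : ℕ) : ℕ :=
  sInf {k | ∃ R : Finset (ℕ × ℕ), IsRuler2 n m R ∧ R.card = k}

/-- The domain of an `n` by `m` two-dimensional partial word. -/
def domain2 {A : Type*} (n m : ℕ) (w : ℕ × ℕ → Option A) : Finset (ℕ × ℕ) :=
  (Finset.range n ×ˢ Finset.range m).filter fun p => (w p).isSome

/-- An `n` by `m` two-dimensional partial word is unbordered if its domain is an
`(n,m)`-ruler and every nonzero measurable vector can be measured between two
positions carrying distinct letters. -/
def Unbordered2 {A : Type*} (n m : ℕ) (w : ℕ × ℕ → Option A) : Prop :=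
  IsRuler2 n m (domain2 n m w) ∧
    ∀ x y : ℤ, |x| ≤ (n : ℤ) - 1 → |y| ≤ (m : ℤ) - 1 → ¬(x = 0 ∧ y = 0) →
      ∃ p ∈ domain2 n m w, ∃ q ∈ domain2 n m w,
        (p.1 : ℤ) - (q.1 : ℤ) = x ∧ (p.2 : ℤ) - (q.2 : ℤ) = y ∧ w p ≠ w q

/-- Number of holes of an `n` by `m` two-dimensional partial word. -/
def holes2 {A : Type*} (n m : ℕ) (w : ℕ × ℕ → Option A) : ℕ :=
  n * m - (domain2 n m w).card

/-- Maximum number of holes an unbordered `n` by `m` two-dimensional partial word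
over an alphabet of size `k` can have. -/
noncomputable def HB2 (k n m : ℕ) : ℕ :=
  sSup {h | ∃ w : ℕ × ℕ → Option (Fin k), Unbordered2 n m w ∧ holes2 n m w = h}

theorem List.IsPrefix.getD_eq {α : Type*} {x w : List α} (h : x <+: w) (d : α) {i : ℕ}
    (hi : i < x.length) : x.getD i d = w.getD i d := by
  obtain ⟨t, rfl⟩ := h
  exact (List.getD_append x t d i hi).symm

theorem List.IsSuffix.getD_eq {α : Type*} {y w : List α} (h : y <:+ w) (d : α) (i : ℕ) :
    y.getD i d = w.getD (w.length - y.length + i) d := by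
  obtain ⟨u, rfl⟩ := h
  rw [List.getD_append_right u y d _ (by simp)]
  simp

namespace PartialWord

variable {A : Type*}

theorem mem_domain {w : List (Option A)} {i : ℕ} : i ∈ domain w ↔ (w.getD i none).isSome := by
  refine ⟨fun h => (Finset.mem_filter.1 h).2, fun h => Finset.mem_filter.2 ⟨?_, h⟩⟩
  by_contra hi
  rw [List.getD_eq_default w none (not_lt.1 (Finset.mem_range.not.1 hi))] at h
  exact Bool.false_ne_true h

theorem Compatible.eq_of_getD_eq_some {x y : List (Option A)} (h : Compatible x y) {i : ℕ}
    {a b : A} (ha : x.getD i none = some a) (hb : y.getD i none = some b) : a = b := by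
  have hi : i ∈ domain x ∩ domain y :=
    Finset.mem_inter.2 ⟨mem_domain.2 (by rw [ha]; rfl), mem_domain.2 (by rw [hb]; rfl)⟩
  have hab := h.2 i hi
  rw [ha, hb] at hab
  exact Option.some.inj hab

/-- A border of length `ℓ` would make the letters at distance `w.length - ℓ` agree, so one
pair of distinct letters at each such distance rules out every border. -/
theorem unbordered_of_forall_shift {w : List (Option A)}
    (h : ∀ d, 0 < d → d < w.length →
      ∃ i a b, w.getD i none = some a ∧ w.getD (i + d) none = some b ∧ a ≠ b) :
    Unbordered w := by
  intro x y hx hy hne hlt hxy hcomp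
  obtain ⟨i, a, b, ha, hb, hab⟩ :=
    h (w.length - x.length) (by omega) (by have := List.length_pos_iff.2 hne; omega)
  have hi : i < x.length := by
    by_contra hi
    rw [List.getD_eq_default w none (by omega)] at hb
    cases hb
  refine hab (hcomp.eq_of_getD_eq_some (i := i) ?_ ?_)
  · rwa [hx.getD_eq none hi]
  · rwa [hy.getD_eq none, ← hxy, add_comm]

def ofRuler (n : ℕ) (R : Finset ℕ) : List (Option ℕ) :=
  (List.range n).map fun i => if i ∈ R then some i else none

theorem length_ofRuler (n : ℕ) (R : Finset ℕ) : (ofRuler n R).length = n := by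
  simp [ofRuler]

theorem getD_ofRuler (n : ℕ) (R : Finset ℕ) (i : ℕ) :
    (ofRuler n R).getD i none = if i < n ∧ i ∈ R then some i else none := by
  by_cases hi : i < n
  · rw [List.getD_eq_getElem _ _ (by rwa [length_ofRuler])]
    simp [ofRuler, hi]
  · rw [List.getD_eq_default _ _ (by rw [length_ofRuler]; omega)]
    simp [hi]

theorem domain_ofRuler (n : ℕ) (R : Finset ℕ) : domain (ofRuler n R) = R.filter (· < n) := by
  ext i
  rw [Finset.mem_filter, and_comm, mem_domain, getD_ofRuler]
  split_ifs with h <;> simp [h]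

end PartialWord

open PartialWord

theorem IsCompleteRuler.unbordered_ofRuler {n : ℕ} {R : Finset ℕ}
    (hR : IsCompleteRuler (n - 1) R) : Unbordered (ofRuler n R) := by
  obtain ⟨hle, -, -, hdiff⟩ := hR
  refine unbordered_of_forall_shift fun d hd hdn => ?_
  rw [length_ofRuler] at hdn
  obtain ⟨_, hr, s, hs, rfl⟩ := hdiff d (by omega)
  have := hle _ hr
  refine ⟨s, s, s + d, ?_, ?_, by omega⟩
  · rw [getD_ofRuler, if_pos ⟨by omega, hs⟩]
  · rw [getD_ofRuler, if_pos ⟨by omega, hr⟩]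

theorem IsCompleteRuler.filter_lt_eq_self {n : ℕ} {R : Finset ℕ} (hn : 1 ≤ n)
    (hR : IsCompleteRuler (n - 1) R) : R.filter (· < n) = R :=
  Finset.filter_true_of_mem fun x hx => by have := hR.1 x hx; omega

/-- For every complete sparse ruler `R` of length `n - 1` (with `n ≥ 1`)
there is an alphabet `A` and an unbordered partial word of length `n` over `A` whose
domain is `R`; in fact the partial word `v` over the alphabet `R` (here: with letters the
natural numbers belonging to `R`) defined by `vᵢ = i` if `i ∈ R` and `vᵢ = ⋄` otherwise
is unbordered with `D(v) = R`. -/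
theorem exists_unbordered_of_completeRuler (n : ℕ) (hn : 1 ≤ n) (R : Finset ℕ)
    (hR : IsCompleteRuler (n - 1) R) :
    (∃ (A : Type) (w : List (Option A)),
        w.length = n ∧ PartialWord.Unbordered w ∧ PartialWord.domain w = R) ∧
    PartialWord.Unbordered
      ((List.range n).map fun i => if i ∈ R then some i else (none : Option ℕ)) ∧
    PartialWord.domain
      ((List.range n).map fun i => if i ∈ R then some i else (none : Option ℕ)) = R := by
  have hunb : Unbordered (ofRuler n R) := hR.unbordered_ofRuler
  have hdom : domain (ofRuler n R) = R := by rw [domain_ofRuler, hR.filter_lt_eq_self hn]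
  exact ⟨⟨ℕ, ofRuler n R, length_ofRuler n R, hunb, hdom⟩, hunb, hdom⟩
end

section
/- For every n ≥ 2 and every alphabet size k with k ≥ M₁(n − 1), one has HB_k(n) = n − M₁(n − 1); in particular HB_k(n) = HB_n(n) for all k ≥ M₁(n − 1). -/
section Aux

open PartialWord

/-- Card of the filtered range equals `countP`. -/
lemma card_filter_range_getD {A : Type*} (w : List (Option A)) (p : Option A → Bool) :
    ((Finset.range w.length).filter fun i => (p (w.getD i none) : Prop)).card = w.countP p := by
  induction w with
  | nil => simp
  | cons a t ih =>
    rw [Finset.card_filter] at ih ⊢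
    simp only [List.length_cons, Finset.sum_range_succ']
    simp only [List.getD_cons_succ, List.getD_cons_zero, List.countP_cons, ih]

lemma countP_some_add_none {A : Type*} (w : List (Option A)) :
    w.countP (fun x => x.isSome) + w.countP (fun x => x.isNone) = w.length := by
  induction w with
  | nil => simp
  | cons a t ih =>
    simp only [List.countP_cons, List.length_cons]
    cases a <;> simp <;> omega

lemma card_domain_add_holes {A : Type*} (w : List (Option A)) :
    (PartialWord.domain w).card + PartialWord.holes w = w.length := by
  have h1 : (PartialWord.domain w).card = w.countP (fun x => x.isSome) :=
    card_filter_range_getD w _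
  rw [h1, PartialWord.holes, ← countP_some_add_none w]

lemma mem_domain_iff {A : Type*} {w : List (Option A)} {i : ℕ} :
    i ∈ PartialWord.domain w ↔ i < w.length ∧ (w.getD i none).isSome := by
  simp [PartialWord.domain]

/-- Key measuring lemma: an unbordered word measures every distance `d ∈ [1, n-1]`
with distinct letters. -/
lemma unbordered_measure {A : Type*} {w : List (Option A)} (hu : PartialWord.Unbordered w)
    {d : ℕ} (hd1 : 1 ≤ d) (hd2 : d < w.length) :
    ∃ s, s ∈ PartialWord.domain w ∧ s + d ∈ PartialWord.domain w ∧
      w.getD s none ≠ w.getD (s + d) none := by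
  set n := w.length with hn
  set x := w.take (n - d) with hx
  set y := w.drop d with hy
  have hxlen : x.length = n - d := by rw [hx, List.length_take]; omega
  have hylen : y.length = n - d := by simp [hy]; rfl
  have hnot : ¬ PartialWord.Compatible x y := by
    apply hu x y (List.take_prefix _ _) (List.drop_suffix _ _)
    · intro h; rw [h] at hxlen; simp only [List.length_nil] at hxlen; omega
    · omega
    · omega
  have hne : ¬ ∀ i ∈ PartialWord.domain x ∩ PartialWord.domain y,
      x.getD i none = y.getD i none := by
    intro h; exact hnot ⟨by omega, h⟩
  push_neg at hne
  obtain ⟨i, hi, hne⟩ := hne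
  rw [Finset.mem_inter, mem_domain_iff, mem_domain_iff] at hi
  have hilt : i < n - d := by omega
  have hxg : x.getD i none = w.getD i none := by
    rw [List.getD_eq_getElem?_getD, List.getD_eq_getElem?_getD, hx, List.getElem?_take,
      if_pos hilt]
  have hyg : y.getD i none = w.getD (i + d) none := by
    rw [List.getD_eq_getElem?_getD, List.getD_eq_getElem?_getD, hy, List.getElem?_drop,
      Nat.add_comm]
  refine ⟨i, ?_, ?_, ?_⟩
  · rw [mem_domain_iff]; exact ⟨by omega, hxg ▸ hi.1.2⟩
  · rw [mem_domain_iff]; exact ⟨by omega, hyg ▸ hi.2.2⟩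
  · rw [← hxg, ← hyg]; exact hne

lemma ruler_of_unbordered {A : Type*} {w : List (Option A)} (hu : PartialWord.Unbordered w)
    (hn : 2 ≤ w.length) :
    IsCompleteRuler (w.length - 1) (PartialWord.domain w) := by
  set n := w.length with hn'
  have hmax := unbordered_measure hu (d := n - 1) (by omega) (by omega)
  obtain ⟨s, hs, hsd, -⟩ := hmax
  have hs0 : s = 0 := by
    rw [mem_domain_iff] at hsd; omega
  subst hs0
  refine ⟨fun x hx => ?_, hs, by simpa using hsd, fun d hd => ?_⟩
  · rw [mem_domain_iff] at hx; omega
  · rcases Nat.eq_zero_or_pos d with h0 | h1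
    · exact ⟨0, hs, 0, hs, by omega⟩
    · obtain ⟨t, ht, htd, -⟩ := unbordered_measure hu (d := d) h1 (by omega)
      exact ⟨t + d, htd, t, ht, rfl⟩

lemma M1_le_card_domain {A : Type*} {w : List (Option A)} (hu : PartialWord.Unbordered w)
    (hn : 2 ≤ w.length) : M1 (w.length - 1) ≤ (PartialWord.domain w).card :=
  Nat.sInf_le ⟨PartialWord.domain w, ruler_of_unbordered hu hn, rfl⟩

lemma range_isCompleteRuler (n : ℕ) : IsCompleteRuler n (Finset.range (n + 1)) := by
  refine ⟨fun x hx => ?_, ?_, ?_, fun d hd => ⟨d, ?_, 0, ?_, by omega⟩⟩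
  · simp only [Finset.mem_range] at hx; omega
  · simp
  · simp
  · simp only [Finset.mem_range]; omega
  · simp

lemma M1_le_succ (n : ℕ) : M1 n ≤ n + 1 :=
  Nat.sInf_le ⟨Finset.range (n + 1), range_isCompleteRuler n, by simp⟩

lemma one_le_M1 (n : ℕ) : 1 ≤ M1 n := by
  have h : M1 n ∈ {k | ∃ R : Finset ℕ, IsCompleteRuler n R ∧ R.card = k} :=
    Nat.sInf_mem ⟨n + 1, Finset.range (n + 1), range_isCompleteRuler n, by simp⟩
  obtain ⟨R, hR, hcard⟩ := h
  have : 0 ∈ R := hR.2.1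
  have := Finset.card_pos.mpr ⟨0, this⟩
  omega

/-- Construction: an unbordered word with domain a given ruler. -/
lemma exists_unbordered (n k : ℕ) (hn : 2 ≤ n) (R : Finset ℕ)
    (hR : IsCompleteRuler (n - 1) R) (hk : R.card ≤ k) :
    ∃ w : List (Option (Fin k)), w.length = n ∧ PartialWord.Unbordered w ∧
      PartialWord.holes w = n - R.card := by
  have hcard : Fintype.card {x // x ∈ R} ≤ Fintype.card (Fin k) := by
    simp [Fintype.card_coe, hk]
  obtain ⟨e⟩ := Function.Embedding.nonempty_of_card_le hcard
  set f : ℕ → Option (Fin k) := fun i => if h : i ∈ R then some (e ⟨i, h⟩) else none with hf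
  refine ⟨(List.range n).map f, by simp, ?_, ?_⟩
  case _ =>
    -- unbordered and holes; first compute getD
    have hget : ∀ i, i < n → ((List.range n).map f).getD i none = f i := by
      intro i hi
      rw [List.getD_eq_getElem?_getD, List.getElem?_map, List.getElem?_range hi]
      rfl
    rintro x y hxp hys hxne hxlt hxy ⟨hlen, hcomp⟩
    set ℓ := x.length with hℓ
    have hwl : ((List.range n).map f).length = n := by simp
    have hℓ1 : 1 ≤ ℓ := List.length_pos_iff.mpr hxne
    have hℓn : ℓ < n := by rw [hwl] at hxlt; exact hxlt
    obtain ⟨r, hr, s, hsR, hrs⟩ := hR.2.2.2 (n - ℓ) (by omega)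
    have hrle : r ≤ n - 1 := hR.1 r hr
    have hsℓ : s < ℓ := by omega
    have hxt : x = ((List.range n).map f).take ℓ := by
      rw [hℓ]; exact List.prefix_iff_eq_take.mp hxp
    have hyt : y = ((List.range n).map f).drop (n - ℓ) := by
      have := List.suffix_iff_eq_drop.mp hys
      rwa [hwl, ← hxy] at this
    have hxg : x.getD s none = f s := by
      rw [hxt, List.getD_eq_getElem?_getD, List.getElem?_take, if_pos hsℓ,
        ← List.getD_eq_getElem?_getD, hget s (by omega)]
    have hyg : y.getD s none = f r := by
      rw [hyt, List.getD_eq_getElem?_getD, List.getElem?_drop,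
        ← List.getD_eq_getElem?_getD, hget (n - ℓ + s) (by omega)]
      congr 1
      omega
    have hsmem : s ∈ PartialWord.domain x ∩ PartialWord.domain y := by
      rw [Finset.mem_inter, mem_domain_iff, mem_domain_iff, hxg, hyg]
      have hylen : y.length = ℓ := hxy ▸ rfl
      refine ⟨⟨by omega, ?_⟩, ⟨by omega, ?_⟩⟩
      · simp [hf, hsR]
      · simp [hf, hr]
    have := hcomp s hsmem
    rw [hxg, hyg] at this
    simp only [hf, dif_pos hsR, dif_pos hr, Option.some.injEq] at this
    have := e.injective this
    have : s = r := congrArg Subtype.val this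
    omega
  case _ =>
    have hdom : PartialWord.domain ((List.range n).map f) = R := by
      ext i
      rw [mem_domain_iff]
      simp only [List.length_map, List.length_range]
      constructor
      · rintro ⟨hi, hsome⟩
        rw [List.getD_eq_getElem?_getD, List.getElem?_map, List.getElem?_range hi] at hsome
        by_contra h
        simp [hf, h] at hsome
      · intro hi
        have hin : i < n := by have := hR.1 i hi; omega
        refine ⟨hin, ?_⟩
        rw [List.getD_eq_getElem?_getD, List.getElem?_map, List.getElem?_range hin]
        simp [hf, hi]
    have := card_domain_add_holes ((List.range n).map f)
    rw [hdom] at this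
    simp only [List.length_map, List.length_range] at this
    omega

end Aux

/-- For every `n ≥ 2` and every alphabet size `k ≥ M₁(n-1)`, one has
`HB_k(n) = n - M₁(n-1)`; in particular `HB_k(n) = HB_n(n)` for all `k ≥ M₁(n-1)`. -/
theorem HB_eq_of_M1_le (n k : ℕ) (hn : 2 ≤ n) (hk : M1 (n - 1) ≤ k) :
    HB k n = n - M1 (n - 1) ∧ HB k n = HB n n := by
  have hM1 : ∀ k', M1 (n - 1) ≤ k' → HB k' n = n - M1 (n - 1) := by
    intro k' hk'
    have hM1mem : M1 (n - 1) ∈ {m | ∃ R : Finset ℕ, IsCompleteRuler (n - 1) R ∧ R.card = m} :=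
      Nat.sInf_mem ⟨n, Finset.range (n - 1 + 1), range_isCompleteRuler (n - 1), by simp; omega⟩
    obtain ⟨R, hR, hRcard⟩ := hM1mem
    obtain ⟨w, hwlen, hwu, hwh⟩ := exists_unbordered n k' hn R hR (by omega)
    have hmem : n - M1 (n - 1) ∈ {h | ∃ w : List (Option (Fin k')),
        w.length = n ∧ PartialWord.Unbordered w ∧ PartialWord.holes w = h} :=
      ⟨w, hwlen, hwu, by omega⟩
    have hub : ∀ h ∈ {h | ∃ w : List (Option (Fin k')),
        w.length = n ∧ PartialWord.Unbordered w ∧ PartialWord.holes w = h},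
        h ≤ n - M1 (n - 1) := by
      rintro h ⟨w', hwl', hwu', hwh'⟩
      have h1 := M1_le_card_domain hwu' (by omega)
      have h2 := card_domain_add_holes w'
      rw [hwl'] at h1 h2
      omega
    exact le_antisymm (csSup_le ⟨_, hmem⟩ hub) (le_csSup ⟨n - M1 (n - 1), hub⟩ hmem)
  have hM1n : M1 (n - 1) ≤ n := by
    have := M1_le_succ (n - 1); omega
  exact ⟨hM1 k hk, by rw [hM1 k hk, hM1 n hM1n]⟩
end

section
/- For all k ≥ 2 and n ≥ 1, HB_k(n) ≤ n − √(2.43(n − 1)). -/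
lemma num_sin' : (43/200 : ℝ) * (Real.pi + 27/20) ≤ Real.sin (27/20) := by
  have hx : |(27/80 : ℝ)| ≤ 1 := by rw [abs_of_nonneg] <;> norm_num
  have hs := Real.sin_bound hx
  have hc := Real.cos_bound hx
  rw [abs_sub_le_iff] at hs hc
  rw [show |(27/80:ℝ)| = 27/80 by rw [abs_of_nonneg]; norm_num] at hs hc
  obtain ⟨hs1, hs2⟩ := hs
  obtain ⟨hc1, hc2⟩ := hc
  set s := Real.sin (27/80) with hsdef
  set c := Real.cos (27/80) with hcdef
  have hsu : s ≤ 0.3317686 := by norm_num at hs1 ⊢; linarith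
  have hsl : (0.3304169:ℝ) ≤ s := by norm_num at hs2 ⊢; linarith
  have hcl : (0.9423710:ℝ) ≤ c := by norm_num at hc2 ⊢; linarith
  have hcu : c ≤ 1 := Real.cos_le_one _
  have h40 : Real.sin (27/40) = 2 * s * c := by
    rw [show (27/40:ℝ) = 2*(27/80) by norm_num, Real.sin_two_mul]
  have h40c : Real.cos (27/40) = 1 - 2 * s^2 := by
    rw [show (27/40:ℝ) = 2*(27/80) by norm_num, Real.cos_two_mul]
    have := Real.sin_sq_add_cos_sq (27/80)
    rw [← hsdef, ← hcdef] at this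
    nlinarith
  have h20 : Real.sin (27/20) = 2 * (2*s*c) * (1 - 2*s^2) := by
    rw [show (27/20:ℝ) = 2*(27/40) by norm_num, Real.sin_two_mul, h40, h40c]
  have hpi := Real.pi_lt_d2
  rw [h20]
  have hspos : (0:ℝ) < s := by linarith
  have hcpos : (0:ℝ) < c := by linarith
  have q1 : (0.3113:ℝ) ≤ s * c := by nlinarith
  have q2 : (0.7798:ℝ) ≤ 1 - 2*s^2 := by nlinarith
  have q3 : (0.3113:ℝ) * 0.7798 ≤ (s*c) * (1-2*s^2) :=
    mul_le_mul q1 q2 (by norm_num) (by positivity)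
  nlinarith [q3]


lemma dirichlet (θ : ℝ) (L : ℕ) :
    2 * Real.sin (θ/2) * ∑ d ∈ Finset.range L, Real.cos ((d+1) * θ)
      = Real.sin (((L:ℝ) + 1/2) * θ) - Real.sin (θ/2) := by
  induction L with
  | zero => rw [show ((0:ℕ):ℝ) + 1/2 = 1/2 by norm_num]; simp [one_div, inv_mul_eq_div]
  | succ L ih =>
    rw [Finset.sum_range_succ, mul_add, ih]
    have h1 : (((L:ℕ)+1:ℕ):ℝ) + 1/2 = ((L:ℝ)+1) + 1/2 := by push_cast; ring
    rw [h1]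
    have e1 : (((L:ℝ)+1) + 1/2) * θ = ((L:ℝ)+1)*θ + θ/2 := by ring
    have e2 : ((L:ℝ) + 1/2) * θ = ((L:ℝ)+1)*θ - θ/2 := by ring
    rw [e1, e2, Real.sin_add, Real.sin_sub]
    ring



lemma cos_double_sum_nonneg (θ : ℝ) (D : Finset ℕ) :
    0 ≤ ∑ p ∈ D ×ˢ D, Real.cos (((p.1:ℝ) - (p.2:ℝ)) * θ) := by
  have expand : ∑ p ∈ D ×ˢ D, Real.cos (((p.1:ℝ) - (p.2:ℝ)) * θ)
      = (∑ a ∈ D, Real.cos ((a:ℝ)*θ))^2 + (∑ a ∈ D, Real.sin ((a:ℝ)*θ))^2 := by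
    rw [Finset.sum_product]
    have h : ∀ a b : ℕ, Real.cos (((a:ℝ) - (b:ℝ)) * θ)
        = Real.cos ((a:ℝ)*θ) * Real.cos ((b:ℝ)*θ) + Real.sin ((a:ℝ)*θ) * Real.sin ((b:ℝ)*θ) := by
      intro a b
      rw [show ((a:ℝ) - (b:ℝ)) * θ = (a:ℝ)*θ - (b:ℝ)*θ by ring, Real.cos_sub]
    simp_rw [h]
    rw [sq, sq, Finset.sum_mul_sum, Finset.sum_mul_sum, ← Finset.sum_add_distrib]
    exact Finset.sum_congr rfl fun x _ => Finset.sum_add_distrib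
  rw [expand]; positivity

lemma sum_one_sub_cos_le (θ : ℝ) (D : Finset ℕ) :
    ∑ p ∈ D ×ˢ D, (1 - Real.cos (((p.1:ℝ) - (p.2:ℝ)) * θ)) ≤ (D.card:ℝ)^2 := by
  rw [Finset.sum_sub_distrib, Finset.sum_const, Finset.card_product, nsmul_eq_mul]
  push_cast
  nlinarith [cos_double_sum_nonneg θ D]

lemma two_sum_le (θ : ℝ) (L : ℕ) (D : Finset ℕ) (g : ℕ → ℕ)
    (meas : ∀ d ∈ Finset.range L, g d ∈ D ∧ g d + (d+1) ∈ D) :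
    2 * ∑ d ∈ Finset.range L, (1 - Real.cos (((d:ℝ)+1) * θ))
      ≤ ∑ p ∈ D ×ˢ D, (1 - Real.cos (((p.1:ℝ) - (p.2:ℝ)) * θ)) := by
  classical
  have fnonneg : ∀ p : ℕ × ℕ, 0 ≤ 1 - Real.cos (((p.1:ℝ) - (p.2:ℝ)) * θ) := fun p => by
    have := Real.cos_le_one (((p.1:ℝ) - (p.2:ℝ)) * θ); linarith
  have hsub : (Finset.range L).image (fun d => (g d, g d + (d+1)))
      ∪ (Finset.range L).image (fun d => (g d + (d+1), g d)) ⊆ D ×ˢ D := by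
    intro p hp
    rw [Finset.mem_union] at hp
    rcases hp with hp | hp
    · rw [Finset.mem_image] at hp
      obtain ⟨d, hd, rfl⟩ := hp
      obtain ⟨h1, h2⟩ := meas d hd
      exact Finset.mem_product.2 ⟨by simpa using h1, by simpa using h2⟩
    · rw [Finset.mem_image] at hp
      obtain ⟨d, hd, rfl⟩ := hp
      obtain ⟨h1, h2⟩ := meas d hd
      exact Finset.mem_product.2 ⟨by simpa using h2, by simpa using h1⟩
  have hdisj : Disjoint ((Finset.range L).image (fun d => (g d, g d + (d+1))))
      ((Finset.range L).image (fun d => (g d + (d+1), g d))) := by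
    rw [Finset.disjoint_left]
    intro p hp1 hp2
    rw [Finset.mem_image] at hp1 hp2
    obtain ⟨d, _, rfl⟩ := hp1
    obtain ⟨e, _, he⟩ := hp2
    have h1 := congrArg Prod.fst he
    have h2 := congrArg Prod.snd he
    simp only at h1 h2
    omega
  have sum1 : ∑ p ∈ (Finset.range L).image (fun d => (g d, g d + (d+1))),
      (1 - Real.cos (((p.1:ℝ) - (p.2:ℝ)) * θ))
      = ∑ d ∈ Finset.range L, (1 - Real.cos (((d:ℝ)+1) * θ)) := by
    rw [Finset.sum_image]
    · apply Finset.sum_congr rfl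
      intro d _
      congr 1
      rw [show ((g d : ℝ) - ((g d + (d+1) : ℕ):ℝ)) * θ = -((((d:ℝ)+1)) * θ) by push_cast; ring,
        Real.cos_neg]
    · intro a _ b _ hab
      have h1 := congrArg Prod.fst hab
      have h2 := congrArg Prod.snd hab
      simp only at h1 h2
      omega
  have sum2 : ∑ p ∈ (Finset.range L).image (fun d => (g d + (d+1), g d)),
      (1 - Real.cos (((p.1:ℝ) - (p.2:ℝ)) * θ))
      = ∑ d ∈ Finset.range L, (1 - Real.cos (((d:ℝ)+1) * θ)) := by
    rw [Finset.sum_image]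
    · apply Finset.sum_congr rfl
      intro d _
      congr 1
      rw [show (((g d + (d+1) : ℕ):ℝ) - (g d : ℝ)) * θ = (((d:ℝ)+1)) * θ by push_cast; ring]
    · intro a _ b _ hab
      have h1 := congrArg Prod.fst hab
      have h2 := congrArg Prod.snd hab
      simp only at h1 h2
      omega
  calc 2 * ∑ d ∈ Finset.range L, (1 - Real.cos (((d:ℝ)+1) * θ))
      = ∑ p ∈ (Finset.range L).image (fun d => (g d, g d + (d+1)))
          ∪ (Finset.range L).image (fun d => (g d + (d+1), g d)),
          (1 - Real.cos (((p.1:ℝ) - (p.2:ℝ)) * θ)) := by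
        rw [Finset.sum_union hdisj, sum1, sum2]; ring
    _ ≤ ∑ p ∈ D ×ˢ D, (1 - Real.cos (((p.1:ℝ) - (p.2:ℝ)) * θ)) :=
        Finset.sum_le_sum_of_subset_of_nonneg hsub (fun p _ _ => fnonneg p)

lemma key_ruler (L : ℕ) (hL : 1 ≤ L) (D : Finset ℕ) (g : ℕ → ℕ)
    (meas : ∀ d ∈ Finset.range L, g d ∈ D ∧ g d + (d+1) ∈ D) :
    (243/100 : ℝ) * L ≤ (D.card : ℝ)^2 := by
  have hπ3 : (3:ℝ) < Real.pi := Real.pi_gt_three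
  have hπ4 : Real.pi < 3.15 := Real.pi_lt_d2
  have hL1 : (1:ℝ) ≤ (L:ℝ) := by exact_mod_cast hL
  have hLpos : (0:ℝ) < 2*(L:ℝ)+1 := by positivity
  have hφpos : (0:ℝ) < Real.pi + 27/20 := by linarith
  have hθ2 : (2*(Real.pi + 27/20)/(2*(L:ℝ)+1))/2 = (Real.pi + 27/20)/(2*(L:ℝ)+1) := by ring
  set θ : ℝ := 2*(Real.pi + 27/20)/(2*(L:ℝ)+1) with hθdef
  have hs_pos : 0 < Real.sin (θ/2) := by
    rw [hθdef, hθ2]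
    apply Real.sin_pos_of_pos_of_lt_pi
    · positivity
    · rw [div_lt_iff₀ hLpos]
      nlinarith
  have hs_le : Real.sin (θ/2) ≤ (Real.pi + 27/20)/(2*(L:ℝ)+1) := by
    rw [hθdef, hθ2]
    exact le_of_lt (Real.sin_lt (by positivity))
  have chain : 2 * ∑ d ∈ Finset.range L, (1 - Real.cos (((d:ℝ)+1) * θ)) ≤ (D.card:ℝ)^2 :=
    le_trans (two_sum_le θ L D g meas) (sum_one_sub_cos_le θ D)
  have hfull : ((L:ℝ) + 1/2) * θ = Real.pi + 27/20 := by
    rw [hθdef]; field_simp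
  have hdir := dirichlet θ L
  rw [hfull, show Real.pi + 27/20 = 27/20 + Real.pi by ring, Real.sin_add_pi] at hdir
  have hA : 2 * Real.sin (θ/2) * ∑ d ∈ Finset.range L, (1 - Real.cos (((d:ℝ)+1) * θ))
      = 2*Real.sin (θ/2)*(L:ℝ) + Real.sin (27/20) + Real.sin (θ/2) := by
    rw [Finset.sum_sub_distrib, Finset.sum_const, Finset.card_range, nsmul_eq_mul, mul_one]
    have : ∑ d ∈ Finset.range L, Real.cos (((d:ℝ)+1) * θ)
        = ∑ d ∈ Finset.range L, Real.cos (((d:ℝ))*θ + θ) := by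
      apply Finset.sum_congr rfl; intro d _; congr 1; ring
    nlinarith [hdir]
  have hφs : (2*(L:ℝ)+1) * Real.sin (θ/2) ≤ Real.pi + 27/20 := by
    rw [← le_div_iff₀' hLpos] at *
    exact hs_le
  have h1 : (43/200) * ((2*(L:ℝ)+1) * Real.sin (θ/2)) ≤ Real.sin (27/20) := by
    nlinarith [num_sin']
  nlinarith [chain, hA, h1, hs_pos, mul_le_mul_of_nonneg_left chain hs_pos.le]

lemma card_domain {A : Type*} (w : List (Option A)) :
    (PartialWord.domain w).card = w.countP (fun x => x.isSome) := by
  induction w with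
  | nil => simp [PartialWord.domain]
  | cons a t ih =>
    rw [PartialWord.domain, Finset.card_filter, List.length_cons, Finset.sum_range_succ',
      List.countP_cons]
    simp only [List.getD_cons_succ, List.getD_cons_zero]
    rw [← Finset.card_filter, ← PartialWord.domain, ih]

lemma holes_add_card {A : Type*} (w : List (Option A)) :
    PartialWord.holes w + (PartialWord.domain w).card = w.length := by
  rw [PartialWord.holes, card_domain]
  have h1 : w.countP (fun x => x.isNone) = w.countP (fun a => ¬ ((fun x : Option A => x.isSome) a)) := by
    apply List.countP_congr
    intro a _
    cases a <;> simp
  rw [h1, add_comm]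
  exact (w.length_eq_countP_add_countP _).symm

lemma measured {A : Type*} (w : List (Option A)) (hu : PartialWord.Unbordered w)
    {d : ℕ} (hd1 : 1 ≤ d) (hd2 : d < w.length) :
    ∃ i, i ∈ PartialWord.domain w ∧ i + d ∈ PartialWord.domain w := by
  have hxlen : (w.take (w.length - d)).length = w.length - d := by
    rw [List.length_take]; omega
  have hylen : (w.drop d).length = w.length - d := by rw [List.length_drop]
  have hne : w.take (w.length - d) ≠ [] := by
    intro h; rw [h] at hxlen; simp at hxlen; omega
  have hnc := hu (w.take (w.length - d)) (w.drop d) (List.take_prefix _ _) (List.drop_suffix _ _) hne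
    (by omega) (by omega)
  rw [PartialWord.Compatible] at hnc
  push_neg at hnc
  obtain ⟨i, hi, -⟩ := hnc (by omega)
  rw [Finset.mem_inter] at hi
  obtain ⟨hi1, hi2⟩ := hi
  rw [PartialWord.domain, Finset.mem_filter, Finset.mem_range] at hi1 hi2
  rw [hxlen] at hi1
  have e1 : (w.take (w.length - d)).getD i none = w.getD i none := by
    rw [List.getD_eq_getElem?_getD, List.getD_eq_getElem?_getD, List.getElem?_take,
      if_pos hi1.1]
  have e2 : (w.drop d).getD i none = w.getD (d + i) none := by
    rw [List.getD_eq_getElem?_getD, List.getD_eq_getElem?_getD, List.getElem?_drop]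
  refine ⟨i, ?_, ?_⟩ <;> rw [PartialWord.domain, Finset.mem_filter, Finset.mem_range]
  · exact ⟨by omega, by rw [← e1]; exact hi1.2⟩
  · constructor
    · omega
    · rw [show i + d = d + i by omega, ← e2]; exact hi2.2

lemma sqrt_le_n (n : ℕ) (hn : 1 ≤ n) : Real.sqrt (2.43 * ((n:ℝ) - 1)) ≤ (n:ℝ) := by
  have h1 : (1:ℝ) ≤ (n:ℝ) := by exact_mod_cast hn
  have h2 : 2.43 * ((n:ℝ) - 1) ≤ (n:ℝ)^2 := by nlinarith [sq_nonneg ((n:ℝ) - 1.215)]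
  calc Real.sqrt (2.43 * ((n:ℝ) - 1)) ≤ Real.sqrt ((n:ℝ)^2) := Real.sqrt_le_sqrt h2
    _ = (n:ℝ) := Real.sqrt_sq (by linarith)

lemma main_bound {k n : ℕ} (hn : 1 ≤ n) (w : List (Option (Fin k)))
    (hlen : w.length = n) (hu : PartialWord.Unbordered w) :
    (PartialWord.holes w : ℝ) ≤ (n : ℝ) - Real.sqrt (2.43 * ((n : ℝ) - 1)) := by
  classical
  have hsum := holes_add_card w
  rw [hlen] at hsum
  have hsumR : (PartialWord.holes w : ℝ) + ((PartialWord.domain w).card : ℝ) = (n:ℝ) := by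
    exact_mod_cast hsum
  suffices h : Real.sqrt (2.43 * ((n:ℝ) - 1)) ≤ ((PartialWord.domain w).card : ℝ) by linarith
  rcases Nat.lt_or_ge n 2 with hn2 | hn2
  · have : n = 1 := by omega
    subst this
    simp
  · have hL : 1 ≤ n - 1 := by omega
    have hex : ∀ d : ℕ, ∃ i, d < n - 1 →
        (i ∈ PartialWord.domain w ∧ i + (d+1) ∈ PartialWord.domain w) := by
      intro d
      by_cases hd : d < n - 1
      · obtain ⟨i, hi⟩ := measured w hu (d := d+1) (by omega) (by omega)
        exact ⟨i, fun _ => hi⟩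
      · exact ⟨0, fun h => absurd h hd⟩
    choose g hg using hex
    have meas : ∀ d ∈ Finset.range (n-1), g d ∈ PartialWord.domain w ∧
        g d + (d+1) ∈ PartialWord.domain w := fun d hd => hg d (Finset.mem_range.1 hd)
    have hkey := key_ruler (n-1) hL (PartialWord.domain w) g meas
    have hcast : (((n-1 : ℕ)):ℝ) = (n:ℝ) - 1 := by
      push_cast [Nat.cast_sub hn]
      ring
    rw [hcast] at hkey
    have h243 : (2.43:ℝ) * ((n:ℝ) - 1) ≤ ((PartialWord.domain w).card : ℝ)^2 := by
      norm_num at hkey ⊢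
      linarith
    calc Real.sqrt (2.43 * ((n:ℝ) - 1))
        ≤ Real.sqrt (((PartialWord.domain w).card : ℝ)^2) := Real.sqrt_le_sqrt h243
      _ = ((PartialWord.domain w).card : ℝ) := Real.sqrt_sq (by positivity)

/-- For all `k ≥ 2` and `n ≥ 1`, `HB_k(n) ≤ n - √(2.43 (n-1))`. -/
theorem HB_le (k n : ℕ) (hk : 2 ≤ k) (hn : 1 ≤ n) :
    (HB k n : ℝ) ≤ (n : ℝ) - Real.sqrt (2.43 * ((n : ℝ) - 1)) := by
  classical
  have hbdd : BddAbove {h | ∃ w : List (Option (Fin k)),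
      w.length = n ∧ PartialWord.Unbordered w ∧ PartialWord.holes w = h} := by
    refine ⟨n, ?_⟩
    rintro h ⟨w, hw1, -, hw3⟩
    rw [← hw3, ← hw1]
    exact List.countP_le_length
  by_cases hne : {h | ∃ w : List (Option (Fin k)),
      w.length = n ∧ PartialWord.Unbordered w ∧ PartialWord.holes w = h}.Nonempty
  · obtain ⟨w, hw1, hw2, hw3⟩ := Nat.sSup_mem hne hbdd
    rw [HB, ← hw3]
    exact main_bound hn w hw1 hw2
  · rw [Set.not_nonempty_iff_eq_empty] at hne
    rw [HB, hne, csSup_empty]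
    simp only [Nat.bot_eq_zero, Nat.cast_zero]
    have := sqrt_le_n n hn
    linarith
end

section
/- Let a, b, c, d be four distinct letters. The partial word a⁴b³⋄⁵⁸a(⋄²c)³(⋄⁶d)⁷(⋄³b)³ of length 136 over the alphabet {a, b, c, d} is unbordered and has exactly 115 holes. -/
set_option maxRecDepth 10000

-- key check lemma
lemma getD_take {A : Type*} (w : List (Option A)) {l i : ℕ} (h : i < l) :
    (w.take l).getD i none = w.getD i none := by
  simp [List.getD_eq_getElem?_getD, List.getElem?_take, h]

lemma getD_drop {A : Type*} (w : List (Option A)) (k i : ℕ) :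
    (w.drop k).getD i none = w.getD (k + i) none := by
  simp [List.getD_eq_getElem?_getD, List.getElem?_drop]

lemma unbordered_of_check {A : Type*} (w : List (Option A))
    (h : ∀ l < w.length, 0 < l → ∃ i < l, (w.getD i none).isSome ∧
      (w.getD (w.length - l + i) none).isSome ∧
      w.getD i none ≠ w.getD (w.length - l + i) none) :
    PartialWord.Unbordered w := by
  intro x y hx hy hne hlt hlen hcomp
  have hxl : x = w.take x.length := List.prefix_iff_eq_take.mp hx
  have hyl : y = w.drop (w.length - y.length) := List.suffix_iff_eq_drop.mp hy
  obtain ⟨i, hil, hs1, hs2, hne'⟩ := h x.length hlt (List.length_pos_iff.mpr hne)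
  apply hne'
  have hmem : i ∈ PartialWord.domain x ∩ PartialWord.domain y := by
    rw [Finset.mem_inter]
    constructor <;> rw [PartialWord.domain, Finset.mem_filter, Finset.mem_range]
    · exact ⟨hil, by rw [hxl, getD_take w hil]; exact hs1⟩
    · refine ⟨by omega, ?_⟩
      rw [hyl, getD_drop, ← hlen]
      exact hs2
  have := hcomp.2 i hmem
  rw [hxl, getD_take w hil, hyl, getD_drop, ← hlen] at this
  exact this

def w0 : List (Option (Fin 4)) :=
  List.replicate 4 (some 0) ++ List.replicate 3 (some 1) ++ List.replicate 58 none ++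
    [some 0] ++ listPow (List.replicate 2 none ++ [some 2]) 3 ++
    listPow (List.replicate 6 none ++ [some 3]) 7 ++
    listPow (List.replicate 3 none ++ [some 1]) 3

lemma w0_unbordered : PartialWord.Unbordered w0 := by
  apply unbordered_of_check
  have : w0.length = 136 := by decide
  rw [this]
  decide

-- transfer
lemma getD_map {A B : Type*} (f : Option A → Option B) (hf : f none = none)
    (l : List (Option A)) (i : ℕ) : (l.map f).getD i none = f (l.getD i none) := by
  simp only [List.getD_eq_getElem?_getD, List.getElem?_map]
  cases l[i]? <;> simp [hf]

lemma unbordered_map {A B : Type*} (ψ : A → B) (hψ : Function.Injective ψ)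
    (w : List (Option A)) (h : PartialWord.Unbordered w) :
    PartialWord.Unbordered (w.map (Option.map ψ)) := by
  intro x y hx hy hne hlt hlen hcomp
  set f : Option A → Option B := Option.map ψ with hfdef
  have hf : f none = none := rfl
  have hxl : x = (w.take x.length).map f := by
    rw [List.map_take]; exact List.prefix_iff_eq_take.mp hx
  have hyl : y = (w.drop (w.length - y.length)).map f := by
    have := List.suffix_iff_eq_drop.mp hy
    rw [List.map_drop]
    simpa using this
  refine h (w.take x.length) (w.drop (w.length - y.length))
    (List.take_prefix _ _) (List.drop_suffix _ _) ?_ ?_ ?_ ?_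
  · intro hemp
    apply hne
    rw [hxl, hemp]; rfl
  · have := hlt
    simp only [List.length_map] at this ⊢
    have h1 : (w.take x.length).length = x.length := by
      rw [List.length_take]; omega
    omega
  · have h1 : (w.take x.length).length = x.length := by
      rw [List.length_take]
      have := hlt; simp only [List.length_map] at this; omega
    have h2 : (w.drop (w.length - y.length)).length = y.length := by
      rw [List.length_drop]
      have : y.length ≤ w.length := by
        have := hy.length_le; simpa using this
      omega
    rw [h1, h2]; exact hlen
  · constructor
    · have := hcomp.1
      rw [hxl, hyl] at this
      simpa using this
    · intro i hi
      rw [Finset.mem_inter, PartialWord.domain, PartialWord.domain,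
        Finset.mem_filter, Finset.mem_filter, Finset.mem_range, Finset.mem_range] at hi
      obtain ⟨⟨hi1, hi2⟩, hi3, hi4⟩ := hi
      have key := hcomp.2 i ?_
      · rw [hxl, hyl, getD_map f hf, getD_map f hf] at key
        exact Option.map_injective hψ key
      · rw [Finset.mem_inter, PartialWord.domain, PartialWord.domain,
          Finset.mem_filter, Finset.mem_filter, Finset.mem_range, Finset.mem_range]
        rw [hxl, hyl]
        simp only [List.length_map, getD_map f hf]
        refine ⟨⟨hi1, ?_⟩, hi3, ?_⟩
        · rcases hval : (w.take x.length).getD i none with _ | v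
          · rw [hval] at hi2; simp at hi2
          · simp [hval, hfdef]
        · rcases hval : (w.drop (w.length - y.length)).getD i none with _ | v
          · rw [hval] at hi4; simp at hi4
          · simp [hval, hfdef]

lemma listPow_map {α β : Type*} (f : α → β) (u : List α) (t : ℕ) :
    (listPow u t).map f = listPow (u.map f) t := by
  simp [listPow, List.map_flatten]

/-- For four distinct letters `a, b, c, d`, the partial word
`a⁴b³⋄⁵⁸a(⋄²c)³(⋄⁶d)⁷(⋄³b)³` of length `136` over the alphabet `{a,b,c,d}` is
unbordered and has exactly `115` holes. -/
theorem word136_unbordered {A : Type*} (a b c d : A) (hab : a ≠ b) (hac : a ≠ c)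
    (had : a ≠ d) (hbc : b ≠ c) (hbd : b ≠ d) (hcd : c ≠ d) :
    let w : List (Option A) :=
      List.replicate 4 (some a) ++ List.replicate 3 (some b) ++ List.replicate 58 none ++
        [some a] ++ listPow (List.replicate 2 none ++ [some c]) 3 ++
        listPow (List.replicate 6 none ++ [some d]) 7 ++
        listPow (List.replicate 3 none ++ [some b]) 3
    w.length = 136 ∧ PartialWord.Unbordered w ∧ PartialWord.holes w = 115 := by
  intro w
  set ψ : Fin 4 → A := ![a, b, c, d] with hψdef
  have hψ : Function.Injective ψ := by
    intro i j hij
    revert hij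
    fin_cases i <;> fin_cases j <;> simp [hψdef] <;> tauto
  have hw : w = w0.map (Option.map ψ) := by
    show w = _
    simp only [w0, List.map_append, List.map_replicate, listPow_map, List.map_cons,
      List.map_nil, Option.map_some, Option.map_none]
    simp [w, hψdef]
  refine ⟨?_, ?_, ?_⟩
  · rw [hw, List.length_map]; decide
  · rw [hw]; exact unbordered_map ψ hψ w0 w0_unbordered
  · rw [hw, PartialWord.holes, List.countP_map]
    have : ((fun x => x.isNone) ∘ Option.map ψ) = fun x : Option (Fin 4) => x.isNone := by
      funext o; cases o <;> rfl
    rw [this]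
    decide
end

section
/- Let a, b, c, d be four distinct letters. The partial word ab³⋄³(a⋄⁶)³b(⋄¹⁴c)⁵(⋄⁷d)⁴b³ of length 139 over the alphabet {a, b, c, d} is unbordered and has exactly 119 holes. -/
/-! A border of length `ℓ` is ruled out by a single position `i < ℓ` where the prefix and the
suffix of length `ℓ` carry two different letters. Compatibility only sees which letters are
equal, so renaming the letters injectively preserves unborderedness; hence it suffices to find
such a position for each of the 138 proper lengths in the copy of the word over `Fin 4`, which
is a finite computation. -/

namespace List

variable {α : Type*}

lemma getD_take_of_lt {w : List α} {d : α} {i ℓ : ℕ} (hi : i < ℓ) :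
    (w.take ℓ).getD i d = w.getD i d := by
  simp [getD_eq_getElem?_getD, getElem?_take_of_lt hi]

lemma getD_drop (w : List α) (d : α) (k i : ℕ) : (w.drop k).getD i d = w.getD (k + i) d := by
  simp [getD_eq_getElem?_getD]

end List

namespace PartialWord

variable {A B : Type*}

lemma getD_map_optionMap (f : B → A) (w : List (Option B)) (i : ℕ) :
    (w.map (Option.map f)).getD i none = Option.map f (w.getD i none) :=
  List.getD_map w none (Option.map f)

lemma domain_map (f : B → A) (w : List (Option B)) :
    domain (w.map (Option.map f)) = domain w := by
  ext i
  simp only [domain, List.length_map, getD_map_optionMap, Option.isSome_map]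

lemma compatible_map_iff {f : B → A} (hf : Function.Injective f) (x y : List (Option B)) :
    Compatible (x.map (Option.map f)) (y.map (Option.map f)) ↔ Compatible x y := by
  simp only [Compatible, domain_map, List.length_map, getD_map_optionMap,
    (Option.map_injective hf).eq_iff]

lemma Unbordered.map {f : B → A} (hf : Function.Injective f) {w : List (Option B)}
    (hw : Unbordered w) : Unbordered (w.map (Option.map f)) := by
  intro x y hx hy hx0 hlt hlen hxy
  rw [List.length_map] at hlt
  have hx' : x = (w.take x.length).map (Option.map f) := by
    rw [List.map_take]; exact List.prefix_iff_eq_take.mp hx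
  have hy' : y = (w.drop (w.length - x.length)).map (Option.map f) := by
    rw [List.map_drop, hlen, ← List.length_map (Option.map f)]
    exact List.suffix_iff_eq_drop.mp hy
  rw [hx', hy', compatible_map_iff hf] at hxy
  have hℓ : 0 < x.length := List.length_pos_iff.mpr hx0
  refine hw _ _ (List.take_prefix _ _) (List.drop_suffix _ _) ?_ ?_ ?_ hxy
  · exact List.ne_nil_of_length_pos (by simp only [List.length_take]; omega)
  · simp only [List.length_take]; omega
  · simp only [List.length_take, List.length_drop]; omega

lemma holes_map (f : B → A) (w : List (Option B)) :
    holes (w.map (Option.map f)) = holes w := by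
  simp only [holes, List.countP_map]
  congr 1
  ext o
  simp

lemma unbordered_of_forall_exists_ne {w : List (Option A)}
    (h : ∀ ℓ < w.length, 0 < ℓ → ∃ i < ℓ, (w.getD i none).isSome ∧
      (w.getD (w.length - ℓ + i) none).isSome ∧
      w.getD i none ≠ w.getD (w.length - ℓ + i) none) :
    Unbordered w := by
  intro x y hx hy hx0 hlt hlen hxy
  obtain ⟨i, hiℓ, hsome, hsome', hne⟩ := h x.length hlt (List.length_pos_iff.mpr hx0)
  have hxi : x.getD i none = w.getD i none := by
    rw [List.prefix_iff_eq_take.mp hx, List.getD_take_of_lt hiℓ]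
  have hyi : y.getD i none = w.getD (w.length - x.length + i) none := by
    rw [List.suffix_iff_eq_drop.mp hy, List.getD_drop, hlen]
  have hi : i ∈ domain x ∩ domain y := by
    simp only [Finset.mem_inter, domain, Finset.mem_filter, Finset.mem_range, hxi, hyi]
    exact ⟨⟨hiℓ, hsome⟩, hlen ▸ hiℓ, hsome'⟩
  exact hne (hxi ▸ hyi ▸ hxy.2 i hi)

end PartialWord

def word139 {A : Type*} (a b c d : A) : List (Option A) :=
  [some a] ++ List.replicate 3 (some b) ++ List.replicate 3 none ++
    listPow ([some a] ++ List.replicate 6 none) 3 ++ [some b] ++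
    listPow (List.replicate 14 none ++ [some c]) 5 ++
    listPow (List.replicate 7 none ++ [some d]) 4 ++ List.replicate 3 (some b)

lemma word139_eq_map {A : Type*} (a b c d : A) :
    word139 a b c d = (word139 (0 : Fin 4) 1 2 3).map (Option.map ![a, b, c, d]) := by
  simp [word139, listPow]

set_option maxRecDepth 20000 in
lemma word139_fin_length : (word139 (0 : Fin 4) 1 2 3).length = 139 := by
  decide

set_option maxRecDepth 20000 in
lemma word139_fin_holes : PartialWord.holes (word139 (0 : Fin 4) 1 2 3) = 119 := by
  decide

set_option maxRecDepth 20000 in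
lemma word139_fin_unbordered : PartialWord.Unbordered (word139 (0 : Fin 4) 1 2 3) :=
  PartialWord.unbordered_of_forall_exists_ne (by decide)

/-- For four distinct letters `a, b, c, d`, the partial word
`ab³⋄³(a⋄⁶)³b(⋄¹⁴c)⁵(⋄⁷d)⁴b³` of length `139` over the alphabet `{a,b,c,d}` is
unbordered and has exactly `119` holes. -/
theorem word139_unbordered {A : Type*} (a b c d : A) (hab : a ≠ b) (hac : a ≠ c)
    (had : a ≠ d) (hbc : b ≠ c) (hbd : b ≠ d) (hcd : c ≠ d) :
    let w : List (Option A) :=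
      [some a] ++ List.replicate 3 (some b) ++ List.replicate 3 none ++
        listPow ([some a] ++ List.replicate 6 none) 3 ++ [some b] ++
        listPow (List.replicate 14 none ++ [some c]) 5 ++
        listPow (List.replicate 7 none ++ [some d]) 4 ++ List.replicate 3 (some b)
    w.length = 139 ∧ PartialWord.Unbordered w ∧ PartialWord.holes w = 119 := by
  show (word139 a b c d).length = 139 ∧ PartialWord.Unbordered (word139 a b c d) ∧
    PartialWord.holes (word139 a b c d) = 119
  have hf : Function.Injective ![a, b, c, d] := by
    intro i j hij
    fin_cases i <;> fin_cases j <;> simp_all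
  rw [word139_eq_map]
  exact ⟨(List.length_map _).trans word139_fin_length, word139_fin_unbordered.map hf,
    (PartialWord.holes_map _ _).trans word139_fin_holes⟩
end

section
/- For all r, s, i ∈ ℕ and all j with 1 ≤ j ≤ r + 1, the extended Wichmann ruler w₁(r, s, i, j) is a complete sparse ruler (of length 4r(r + s + 2) + 3s + 3 + i(r + 1) + j). -/
namespace WichmannAux

lemma mem_ruler (D : List ℕ) (t : ℕ) (ht : t ≤ D.length) :
    (D.take t).sum ∈ rulerOfDiffs D := by
  simp only [rulerOfDiffs, List.mem_toFinset, List.mem_map, List.mem_range]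
  exact ⟨t, by omega, rfl⟩

lemma sum_take_repl (c v : ℕ) (l2 : List ℕ) (t : ℕ) :
    ((List.replicate c v ++ l2).take (c + t)).sum = c * v + (l2.take t).sum := by
  have h : c + t = (List.replicate c v).length + t := by simp
  rw [h, List.take_append, List.sum_append, List.take_of_length_le (by simp),
    Nat.add_sub_cancel_left, List.sum_replicate, smul_eq_mul]

lemma sum_take_repl' (c v t : ℕ) (l2 : List ℕ) (ht : t ≤ c) :
    ((List.replicate c v ++ l2).take t).sum = t * v := by
  rw [List.take_append_of_le_length (by simpa using ht), List.take_replicate,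
    Nat.min_eq_left ht, List.sum_replicate, smul_eq_mul]

lemma wich_eq (r s i j : ℕ) : wichmannDiffs r s i j =
    List.replicate r 1 ++ (List.replicate 1 (r + 1) ++ (List.replicate r (2 * r + 1) ++
    (List.replicate s (4 * r + 3) ++ (List.replicate (r + 1) (2 * r + 2) ++
    (List.replicate r 1 ++ (List.replicate i (r + 1) ++ List.replicate 1 j)))))) := by
  simp [wichmannDiffs]

lemma wich_len (r s i j : ℕ) : (wichmannDiffs r s i j).length = 4 * r + s + i + 3 := by
  simp [wichmannDiffs]; omega

lemma wich_sum (r s i j : ℕ) : (wichmannDiffs r s i j).sum =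
    (r+1)*(2*r+1) + s*(4*r+3) + (r+1)*(2*r+2) + r + i*(r+1) + j := by
  simp [wichmannDiffs]; ring

variable {r s i j : ℕ}

lemma M1 (a : ℕ) (ha : a ≤ r) : a ∈ rulerOfDiffs (wichmannDiffs r s i j) := by
  have h := mem_ruler (wichmannDiffs r s i j) a (by rw [wich_len]; omega)
  rwa [show ((wichmannDiffs r s i j).take a).sum = a by
    rw [wich_eq, sum_take_repl' r 1 a _ ha]; omega] at h

lemma M2 (m : ℕ) (h1 : 1 ≤ m) (hm : m ≤ r + 1) :
    m * (2*r+1) ∈ rulerOfDiffs (wichmannDiffs r s i j) := by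
  obtain ⟨m', rfl⟩ := Nat.exists_eq_add_of_le h1
  have h := mem_ruler (wichmannDiffs r s i j) (r + (1 + m')) (by rw [wich_len]; omega)
  rwa [show ((wichmannDiffs r s i j).take (r + (1 + m'))).sum = (1 + m') * (2*r+1) by
    rw [wich_eq, sum_take_repl, sum_take_repl, sum_take_repl' r (2*r+1) m' _ (by omega)]
    ring] at h

lemma M3 (t : ℕ) (ht : t ≤ s) :
    (r+1)*(2*r+1) + t*(4*r+3) ∈ rulerOfDiffs (wichmannDiffs r s i j) := by
  have h := mem_ruler (wichmannDiffs r s i j) (r + (1 + (r + t))) (by rw [wich_len]; omega)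
  rwa [show ((wichmannDiffs r s i j).take (r + (1 + (r + t)))).sum
      = (r+1)*(2*r+1) + t*(4*r+3) by
    rw [wich_eq, sum_take_repl, sum_take_repl, sum_take_repl,
      sum_take_repl' s (4*r+3) t _ ht]
    ring] at h

lemma M4 (k : ℕ) (hk : k ≤ r + 1) :
    (r+1)*(2*r+1) + s*(4*r+3) + k*(2*r+2) ∈ rulerOfDiffs (wichmannDiffs r s i j) := by
  have h := mem_ruler (wichmannDiffs r s i j) (r + (1 + (r + (s + k))))
    (by rw [wich_len]; omega)
  rwa [show ((wichmannDiffs r s i j).take (r + (1 + (r + (s + k))))).sum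
      = (r+1)*(2*r+1) + s*(4*r+3) + k*(2*r+2) by
    rw [wich_eq, sum_take_repl, sum_take_repl, sum_take_repl, sum_take_repl,
      sum_take_repl' (r+1) (2*r+2) k _ hk]
    ring] at h

lemma M5 (e : ℕ) (he : e ≤ r) :
    (r+1)*(2*r+1) + s*(4*r+3) + (r+1)*(2*r+2) + e ∈ rulerOfDiffs (wichmannDiffs r s i j) := by
  have h := mem_ruler (wichmannDiffs r s i j) (r + (1 + (r + (s + ((r+1) + e)))))
    (by rw [wich_len]; omega)
  rwa [show ((wichmannDiffs r s i j).take (r + (1 + (r + (s + ((r+1) + e)))))).sum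
      = (r+1)*(2*r+1) + s*(4*r+3) + (r+1)*(2*r+2) + e by
    rw [wich_eq, sum_take_repl, sum_take_repl, sum_take_repl, sum_take_repl,
      sum_take_repl, sum_take_repl' r 1 e _ he]
    ring] at h

lemma M6 (p : ℕ) (hp : p ≤ i) :
    (r+1)*(2*r+1) + s*(4*r+3) + (r+1)*(2*r+2) + r + p*(r+1)
      ∈ rulerOfDiffs (wichmannDiffs r s i j) := by
  have h := mem_ruler (wichmannDiffs r s i j) (r + (1 + (r + (s + ((r+1) + (r + p))))))
    (by rw [wich_len]; omega)
  rwa [show ((wichmannDiffs r s i j).take (r + (1 + (r + (s + ((r+1) + (r + p))))))).sum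
      = (r+1)*(2*r+1) + s*(4*r+3) + (r+1)*(2*r+2) + r + p*(r+1) by
    rw [wich_eq, sum_take_repl, sum_take_repl, sum_take_repl, sum_take_repl,
      sum_take_repl, sum_take_repl, sum_take_repl' i (r+1) p _ hp]
    ring] at h

lemma M7 : (r+1)*(2*r+1) + s*(4*r+3) + (r+1)*(2*r+2) + r + i*(r+1) + j
    ∈ rulerOfDiffs (wichmannDiffs r s i j) := by
  have h := mem_ruler (wichmannDiffs r s i j) (wichmannDiffs r s i j).length le_rfl
  rwa [List.take_length, wich_sum] at h

end WichmannAux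

set_option maxHeartbeats 2000000 in
/-- For all `r, s, i ∈ ℕ` and all `j` with `1 ≤ j ≤ r + 1`, the extended
Wichmann ruler `w₁(r,s,i,j)` is a complete sparse ruler of length
`4r(r+s+2) + 3s + 3 + i(r+1) + j`. -/
theorem wichmann_isCompleteRuler (r s i j : ℕ) (hj1 : 1 ≤ j) (hj2 : j ≤ r + 1) :
    IsCompleteRuler (4 * r * (r + s + 2) + 3 * s + 3 + i * (r + 1) + j)
      (rulerOfDiffs (wichmannDiffs r s i j)) := by
  open WichmannAux in
  have hn : 4 * r * (r + s + 2) + 3 * s + 3 + i * (r + 1) + j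
      = (r+1)*(2*r+1) + s*(4*r+3) + (r+1)*(2*r+2) + r + i*(r+1) + j := by ring
  rw [hn]
  refine ⟨?_, ?_, ?_, ?_⟩
  · -- bounded by n
    intro x hx
    simp only [rulerOfDiffs, List.mem_toFinset, List.mem_map, List.mem_range] at hx
    obtain ⟨t, -, rfl⟩ := hx
    rw [← wich_sum (r := r) (s := s) (i := i) (j := j)]
    conv_rhs => rw [← List.take_append_drop t (wichmannDiffs r s i j)]
    rw [List.sum_append]
    exact Nat.le_add_right _ _
  · exact M1 0 (by omega)
  · exact M7
  · -- completeness
    intro d hdn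
    by_cases hQ : (r+1)*(2*r+1) + s*(4*r+3) + (r+1)*(2*r+2) ≤ d
    · -- TOP region
      obtain ⟨d4, hd4⟩ := Nat.exists_eq_add_of_le hQ
      have hd4le : d4 ≤ r + i*(r+1) + j := by linarith
      by_cases hT : d4 ≤ r
      · exact ⟨_, M5 d4 hT, _, M1 0 (by omega), by zify at hd4 ⊢; linear_combination -hd4⟩
      · push_neg at hT
        by_cases hU : d4 ≤ r + i*(r+1)
        · -- T-2
          obtain ⟨d5, hd5⟩ := Nat.exists_eq_add_of_le (show r ≤ d4 by omega)
          have hd51 : 1 ≤ d5 := by omega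
          have hd5le : d5 ≤ i*(r+1) := by linarith
          obtain ⟨p, c, hpc, hc⟩ : ∃ p c, (r+1)*p + c = d5 + r ∧ c < r + 1 :=
            ⟨(d5+r)/(r+1), (d5+r)%(r+1), Nat.div_add_mod _ _, Nat.mod_lt _ (by omega)⟩
          have hp1 : 1 ≤ p := by
            rcases Nat.eq_zero_or_pos p with h | h
            · subst h; simp at hpc; omega
            · exact h
          have hpi : p ≤ i := by
            by_contra h
            push_neg at h
            have h2 : (r+1)*(i+1) ≤ (r+1)*p := Nat.mul_le_mul_left _ (by omega)
            linarith
          obtain ⟨qp, hq⟩ := Nat.exists_eq_add_of_le (show c ≤ r by omega)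
          refine ⟨_, M6 p hpi, _, M1 qp (by omega), ?_⟩
          zify at hd4 hd5 hpc hq ⊢
          linear_combination -hd4 - hd5 + hpc + hq
        · -- T-3
          push_neg at hU
          obtain ⟨d6, hd6⟩ := Nat.exists_eq_add_of_le (show r + i*(r+1) ≤ d4 by omega)
          have hd61 : 1 ≤ d6 := by omega
          have hd6j : d6 ≤ j := by linarith
          obtain ⟨qp, hq⟩ := Nat.exists_eq_add_of_le hd6j
          refine ⟨_, M7, _, M1 qp (by omega), ?_⟩
          zify at hd4 hd6 hq ⊢
          linear_combination -hd4 - hd6 + hq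
    · push_neg at hQ
      by_cases hL2 : (r+1)*(2*r+1) + s*(4*r+3) ≤ d
      · -- HIGH region
        obtain ⟨d3, hd3⟩ := Nat.exists_eq_add_of_le hL2
        have hd3lt : d3 < (r+1)*(2*r+2) := by linarith
        obtain ⟨A, B, hdm, hB⟩ : ∃ A B, (2*r+1)*A + B = d3 ∧ B < 2*r+1 :=
          ⟨d3/(2*r+1), d3%(2*r+1), Nat.div_add_mod _ _, Nat.mod_lt _ (by omega)⟩
        have hA : A ≤ r + 1 := by
          by_contra h
          push_neg at h
          have h2 : (2*r+1)*(r+2) ≤ (2*r+1)*A := Nat.mul_le_mul_left _ (by omega)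
          nlinarith
        rcases le_or_gt B r with hBr | hBr
        · rcases lt_or_ge A B with hAB | hAB
          · -- H-2
            obtain ⟨m, hm⟩ := Nat.exists_eq_add_of_le (le_of_lt hAB)
            refine ⟨_, M4 B (by omega), _, M2 m (by omega) (by omega), ?_⟩
            zify at hd3 hdm hm ⊢
            linear_combination -hd3 + hdm + (2*(r:ℤ)+1) * hm
          · by_cases hABr : A ≤ B + r
            · -- H-3
              obtain ⟨a, ha⟩ := Nat.exists_eq_add_of_le hAB
              refine ⟨_, M4 A hA, _, M1 a (by omega), ?_⟩
              zify at hd3 hdm ha ⊢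
              linear_combination -hd3 + hdm + ha
            · -- H-4
              push_neg at hABr
              have hB0 : B = 0 := by omega
              have hA1 : A = r + 1 := by omega
              refine ⟨_, M5 r le_rfl, _, M2 1 le_rfl (by omega), ?_⟩
              zify at hd3 hdm hB0 hA1 ⊢
              linear_combination -hd3 + hdm - hB0 - (2*(r:ℤ)+1) * hA1
        · -- H-1
          have hAr : A ≤ r := by
            by_contra h
            push_neg at h
            have h2 : (2*r+1)*(r+1) ≤ (2*r+1)*A := Nat.mul_le_mul_left _ (by omega)
            nlinarith
          obtain ⟨c, hc⟩ := Nat.exists_eq_add_of_le (show r + 1 ≤ B by omega)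
          obtain ⟨m, hm⟩ := Nat.exists_eq_add_of_le (show A ≤ r + 1 by omega)
          refine ⟨_, M5 c (by omega), _, M2 m (by omega) (by omega), ?_⟩
          zify at hd3 hdm hc hm ⊢
          linear_combination -hd3 + hdm - hc + (2*(r:ℤ)+1) * hm
      · push_neg at hL2
        by_cases hL1 : (r+1)*(2*r+1) ≤ d
        · -- MID region
          obtain ⟨d2, hd2⟩ := Nat.exists_eq_add_of_le hL1
          have hd2lt : d2 < s*(4*r+3) := by linarith
          obtain ⟨t, e, hte, helt⟩ : ∃ t e, (4*r+3)*t + e = d2 ∧ e < 4*r+3 :=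
            ⟨d2/(4*r+3), d2%(4*r+3), Nat.div_add_mod _ _, Nat.mod_lt _ (by omega)⟩
          have hts : t < s := by
            by_contra h
            push_neg at h
            have h2 : (4*r+3)*s ≤ (4*r+3)*t := Nat.mul_le_mul_left _ h
            nlinarith
          obtain ⟨g, hg⟩ := Nat.exists_eq_add_of_le (le_of_lt hts)
          have hg1 : 1 ≤ g := by omega
          by_cases he0 : e = 0
          · refine ⟨_, M3 t (by omega), _, M1 0 (by omega), ?_⟩
            zify at hd2 hte he0 ⊢
            linear_combination -hd2 + hte - he0
          · by_cases heR : e ≤ r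
            · -- M-1 trichotomy
              by_cases c1 : e ≤ g ∧ 2*e ≤ r + 1
              · refine ⟨_, M3 (t+e) (by omega), _, M2 (2*e) (by omega) (by omega), ?_⟩
                zify at hd2 hte ⊢
                linear_combination -hd2 + hte
              · by_cases c2 : r + 1 ≤ e + g ∧ r + 1 ≤ 2*e
                · obtain ⟨w, hw⟩ := Nat.exists_eq_add_of_le c2.1
                  obtain ⟨v, hv⟩ := Nat.exists_eq_add_of_le c2.2
                  refine ⟨_, M4 v (by omega), _, M3 w (by omega), ?_⟩
                  zify at hd2 hte hg hw hv ⊢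
                  linear_combination -hd2 + hte + (4*(r:ℤ)+3) * hg + (4*(r:ℤ)+3) * hw
                    - (2*(r:ℤ)+2) * hv
                · have hcc : g ≤ e ∧ e + g ≤ r + 1 := by omega
                  obtain ⟨k, hk⟩ := Nat.exists_eq_add_of_le hcc.1
                  refine ⟨_, M4 k (by omega), _, M2 (e+g) (by omega) (by omega), ?_⟩
                  zify at hd2 hte hg hk ⊢
                  linear_combination -hd2 + hte + (4*(r:ℤ)+3) * hg - (2*(r:ℤ)+2) * hk
            · by_cases heR2 : e ≤ 2*r + 1
              · -- M-2
                obtain ⟨e1, he1⟩ := Nat.exists_eq_add_of_le (show r + 1 ≤ e by omega)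
                refine ⟨_, M5 e1 (by omega), _, M3 g (by omega), ?_⟩
                zify at hd2 hte hg he1 ⊢
                linear_combination -hd2 + hte + (4*(r:ℤ)+3) * hg - he1
              · by_cases heR3 : e ≤ 3*r + 2
                · -- M-3 trichotomy
                  obtain ⟨e2, he2⟩ := Nat.exists_eq_add_of_le (show 2*r + 2 ≤ e by omega)
                  by_cases c1 : e2 + 1 ≤ g ∧ 2*e2 ≤ r
                  · refine ⟨_, M3 (t+1+e2) (by omega), _,
                      M2 (2*e2+1) (by omega) (by omega), ?_⟩
                    zify at hd2 hte he2 ⊢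
                    linear_combination -hd2 + hte - he2
                  · by_cases c2 : r + 1 ≤ e2 + g ∧ r ≤ 2*e2
                    · obtain ⟨w, hw⟩ := Nat.exists_eq_add_of_le c2.1
                      obtain ⟨v, hv⟩ := Nat.exists_eq_add_of_le c2.2
                      refine ⟨_, M4 v (by omega), _, M3 w (by omega), ?_⟩
                      zify at hd2 hte hg he2 hw hv ⊢
                      linear_combination -hd2 + hte + (4*(r:ℤ)+3) * hg - he2
                        + (4*(r:ℤ)+3) * hw - (2*(r:ℤ)+2) * hv
                    · have hcc : g ≤ e2 + 1 ∧ e2 + g ≤ r + 1 := by omega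
                      obtain ⟨k, hk⟩ := Nat.exists_eq_add_of_le hcc.1
                      refine ⟨_, M4 k (by omega), _, M2 (e2+g) (by omega) (by omega), ?_⟩
                      zify at hd2 hte hg he2 hk ⊢
                      linear_combination -hd2 + hte + (4*(r:ℤ)+3) * hg - he2
                        - (2*(r:ℤ)+2) * hk
                · -- M-4
                  obtain ⟨a, ha⟩ := Nat.exists_eq_add_of_le (show e ≤ 4*r+3 by omega)
                  refine ⟨_, M3 (t+1) (by omega), _, M1 a (by omega), ?_⟩
                  zify at hd2 hte ha ⊢
                  linear_combination -hd2 + hte + ha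
        · -- LOW region
          push_neg at hL1
          obtain ⟨A, B, hdm, hB⟩ : ∃ A B, (2*r+1)*A + B = d ∧ B < 2*r+1 :=
            ⟨d/(2*r+1), d%(2*r+1), Nat.div_add_mod _ _, Nat.mod_lt _ (by omega)⟩
          have hA : A ≤ r := by
            by_contra h
            push_neg at h
            have h2 : (2*r+1)*(r+1) ≤ (2*r+1)*A := Nat.mul_le_mul_left _ (by omega)
            nlinarith
          rcases le_or_gt B r with hBr | hBr
          · rcases le_or_gt B A with hAB | hAB
            · obtain ⟨x, hx⟩ := Nat.exists_eq_add_of_le hAB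
              by_cases c3a : B ≤ s ∧ B ≤ x
              · -- L-3a
                obtain ⟨b, hb⟩ := Nat.exists_eq_add_of_le c3a.2
                obtain ⟨m, hm⟩ := Nat.exists_eq_add_of_le (show b ≤ r + 1 by omega)
                refine ⟨_, M3 B c3a.1, _, M2 m (by omega) (by omega), ?_⟩
                zify at hdm hx hb hm ⊢
                linear_combination hdm - (2*(r:ℤ)+1) * hx - (2*(r:ℤ)+1) * hb
                  + (2*(r:ℤ)+1) * hm
              · by_cases c3b : x ≤ s
                · -- L-3b
                  have hxB : x ≤ B := by omega
                  obtain ⟨k, hk⟩ := Nat.exists_eq_add_of_le hxB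
                  obtain ⟨w, hw⟩ := Nat.exists_eq_add_of_le c3b
                  refine ⟨_, M4 k (by omega), _, M3 w (by omega), ?_⟩
                  zify at hdm hx hk hw ⊢
                  linear_combination hdm - (2*(r:ℤ)+1) * hx - (2*(r:ℤ)+2) * hk
                    + (4*(r:ℤ)+3) * hw
                · -- L-3c
                  have hsx : s < x := by omega
                  have hsB : s < B := by omega
                  obtain ⟨b, hb⟩ := Nat.exists_eq_add_of_le (le_of_lt hsx)
                  obtain ⟨k, hk⟩ := Nat.exists_eq_add_of_le (le_of_lt hsB)
                  obtain ⟨m, hm⟩ := Nat.exists_eq_add_of_le (show b ≤ r + 1 by omega)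
                  refine ⟨_, M4 k (by omega), _, M2 m (by omega) (by omega), ?_⟩
                  zify at hdm hx hb hk hm ⊢
                  linear_combination hdm - (2*(r:ℤ)+1) * hx - (2*(r:ℤ)+1) * hb
                    - (2*(r:ℤ)+2) * hk + (2*(r:ℤ)+1) * hm
            · -- L-2
              obtain ⟨c, hc⟩ := Nat.exists_eq_add_of_le (le_of_lt hAB)
              obtain ⟨k, hk⟩ := Nat.exists_eq_add_of_le (show A ≤ r + 1 by omega)
              refine ⟨_, M5 c (by omega), _, M4 k (by omega), ?_⟩
              zify at hdm hc hk ⊢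
              linear_combination hdm - hc + (2*(r:ℤ)+2) * hk
          · -- L-1
            obtain ⟨c, hc⟩ := Nat.exists_eq_add_of_le (show r + 1 ≤ B by omega)
            obtain ⟨qp, hq⟩ := Nat.exists_eq_add_of_le (show c ≤ r by omega)
            refine ⟨_, M2 (A+1) (by omega) (by omega), _, M1 qp (by omega), ?_⟩
            zify at hdm hc hq ⊢
            linear_combination hdm - hc + hq
end

section
/- For every n ≥ 213 there exist parameters r, s, i ∈ ℕ and 1 ≤ j ≤ r + 1 such that the extended Wichmann ruler w₁(r, s, i, j) has length n and its number of marks satisfies |w₁(r, s, i, j)| ≤ √(3n) + 4. -/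
/-! Let `K = ⌊√(3n)⌋` and `r = ⌊K/6⌋`. Dividing `n - (4r² + 8r + 3)` by `4r + 3`, and the remainder
by `r + 1`, with remainders taken in `[1, d]` rather than `[0, d)`, yields `s, i, j` with `i ≤ 3`
and `w₁(r, s, i, j)` of length `n`. Its difference representation has `4r + s + i + 3` entries,
so it has at most `4r + s + i + 4` marks, and the choice
`r = ⌊K/6⌋` forces `s ≤ K - 4r - 3`, hence at most `K + 4` marks. -/

theorem Nat.exists_mul_add_eq_of_pos {d m : ℕ} (hd : 0 < d) (hm : 0 < m) :
    ∃ q t, 0 < t ∧ t ≤ d ∧ q * d + t = m :=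
  ⟨(m - 1) / d, (m - 1) % d + 1, Nat.succ_pos _, Nat.mod_lt _ hd, by
    have := Nat.div_add_mod' (m - 1) d
    omega⟩

theorem exists_wichmann_params {r n : ℕ} (h : 4 * r * r + 8 * r + 3 < n) :
    ∃ s i j, 1 ≤ j ∧ j ≤ r + 1 ∧ i ≤ 3 ∧
      4 * r * (r + s + 2) + 3 * s + 3 + i * (r + 1) + j = n := by
  obtain ⟨s, m, hm, hmr, hsm⟩ :=
    Nat.exists_mul_add_eq_of_pos (m := n - (4 * r * r + 8 * r + 3)) (by omega : 0 < 4 * r + 3)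
      (by omega)
  obtain ⟨i, j, hj, hjr, hij⟩ := Nat.exists_mul_add_eq_of_pos (by omega : 0 < r + 1) hm
  refine ⟨s, i, j, hj, hjr, ?_, ?_⟩
  · by_contra! hi
    nlinarith
  · have : 4 * r * (r + s + 2) + 3 * s + 3 = 4 * r * r + 8 * r + 3 + s * (4 * r + 3) := by ring
    omega

/-- The right side minus `(4r + 2)(4r + 3)` is the length of `w₁(r, K - 4r - 3, 3, r + 1)`.
Writing `K = 6r + 3 + e` with `|e| ≤ 3`, three times the right side minus the left side is
`((K + 1)² - 1 - 3n) + (K - e²) ≥ 0`. -/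
theorem length_le_wichmann_of_sqrt {K r n : ℕ} (hK : 9 ≤ K) (hr : 6 * r ≤ K) (hr' : K < 6 * r + 6)
    (hn : 3 * n < (K + 1) ^ 2) :
    n + (4 * r + 2) * (4 * r + 3) ≤ 4 * r * r + 8 * r + 3 + (4 * r + 3) * K := by
  zify at *
  nlinarith

theorem card_rulerOfDiffs_le (D : List ℕ) : (rulerOfDiffs D).card ≤ D.length + 1 :=
  (List.toFinset_card_le _).trans (by simp)

theorem length_wichmannDiffs (r s i j : ℕ) :
    (wichmannDiffs r s i j).length = 4 * r + s + i + 3 := by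
  simp only [wichmannDiffs, List.length_append, List.length_replicate, List.length_singleton]
  ring

/-- For every `n ≥ 213` there exist parameters `r, s, i ∈ ℕ` and
`1 ≤ j ≤ r + 1` such that the extended Wichmann ruler `w₁(r,s,i,j)` has length `n` and
its number of marks is at most `√(3n) + 4`. -/
theorem exists_wichmann_of_length (n : ℕ) (hn : 213 ≤ n) :
    ∃ r s i j : ℕ, 1 ≤ j ∧ j ≤ r + 1 ∧
      4 * r * (r + s + 2) + 3 * s + 3 + i * (r + 1) + j = n ∧
      ((rulerOfDiffs (wichmannDiffs r s i j)).card : ℝ) ≤ Real.sqrt (3 * n) + 4 := by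
  set K := Nat.sqrt (3 * n)
  have hKn : K ^ 2 ≤ 3 * n := Nat.sqrt_le' _
  have hnK : 3 * n < (K + 1) ^ 2 := Nat.lt_succ_sqrt' _
  have hK : 25 ≤ K := Nat.le_sqrt'.2 (by omega)
  obtain ⟨r, hr, hr'⟩ : ∃ r, 6 * r ≤ K ∧ K < 6 * r + 6 := ⟨K / 6, by omega, by omega⟩
  have hcap := length_le_wichmann_of_sqrt (by omega) hr hr' hnK
  obtain ⟨s, i, j, hj, hjr, hi, hlen⟩ := exists_wichmann_params (r := r) (n := n)
    (by nlinarith [Nat.mul_le_mul hr hr])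
  have hs : s + 4 * r + 3 ≤ K := by nlinarith
  refine ⟨r, s, i, j, hj, hjr, hlen, ?_⟩
  have hcard := card_rulerOfDiffs_le (wichmannDiffs r s i j)
  rw [length_wichmannDiffs] at hcard
  calc ((rulerOfDiffs (wichmannDiffs r s i j)).card : ℝ) ≤ ((K + 4 : ℕ) : ℝ) := by
        exact_mod_cast (by omega)
    _ ≤ Real.sqrt (3 * n) + 4 := by
        have := Real.nat_sqrt_le_real_sqrt (a := 3 * n)
        push_cast at this ⊢
        linarith
end

section
/- Let a, b, c, d be four distinct letters. For all r, s ∈ ℕ, the Wichmann word W(r, s) = a b^r ⋄^r (a ⋄^{2r})^r b (⋄^{4r+2} c)^s (⋄^{2r+1} d)^{r+1} b^r over the alphabet {a, b, c, d} is unbordered. -/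
/-!
A partial word `w` is unbordered as soon as every shift `0 < t < |w|` is realised by two
positions `p` and `p + t` holding distinct letters. The letters of `W(r, s)` sit on the
Wichmann ruler: with `B = (r+1)(2r+1)` and `C = B + s(4r+3)`, there is an `a` at every
`m(2r+1)` with `m ≤ r`, a `b` at `1, …, r`, at `B` and at the last `r` positions, a `c` at every
`B + i(4r+3)` and a `d` at every `C + k(2r+2)`. Writing a shift in the mixed radix of the
block it falls into (`2r+1` below `B`, `4r+3` between `B` and `C`, `2r+2` above `C`), an
explicit pair of such positions with distinct letters is found in each case.
-/

theorem Nat.exists_eq_add_mul_add_of_le {n base t : ℕ} (hn : 0 < n) (h : base ≤ t) :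
    ∃ q ρ, t = base + q * n + ρ ∧ ρ < n :=
  ⟨(t - base) / n, (t - base) % n, by have := Nat.div_add_mod' (t - base) n; omega,
    Nat.mod_lt _ hn⟩

namespace PartialWord

variable {A : Type*}

/-- `getD` is `none` out of range, so both positions automatically lie in `w`. -/
def ShiftConflict (w : List (Option A)) (t : ℕ) : Prop :=
  ∃ p β γ, w.getD p none = some β ∧ w.getD (p + t) none = some γ ∧ β ≠ γ

theorem ShiftConflict.of_getD {w : List (Option A)} {t p q : ℕ} {β γ : A}
    (hp : w.getD p none = some β) (hq : w.getD q none = some γ) (hβγ : β ≠ γ)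
    (hpq : p + t = q) : ShiftConflict w t :=
  ⟨p, β, γ, hp, hpq ▸ hq, hβγ⟩

theorem lt_length_of_getD_eq_some {w : List (Option A)} {i : ℕ} {β : A}
    (h : w.getD i none = some β) : i < w.length := by
  by_contra! hle
  rw [List.getD_eq_default w none hle] at h
  cases h

theorem mem_domain_of_getD_eq_some {w : List (Option A)} {i : ℕ} {β : A}
    (h : w.getD i none = some β) : i ∈ domain w := by
  simp only [domain, Finset.mem_filter, Finset.mem_range, h, Option.isSome_some, and_true]
  exact lt_length_of_getD_eq_some h

theorem unbordered_of_shiftConflict {w : List (Option A)}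
    (h : ∀ t, 0 < t → t < w.length → ShiftConflict w t) : Unbordered w := by
  rintro x y hx hy hx0 hxw hxy ⟨-, hagree⟩
  obtain ⟨p, β, γ, hβ, hγ, hβγ⟩ :=
    h (w.length - x.length) (by omega) (by have := List.length_pos_iff.mpr hx0; omega)
  have hpx : p < x.length := by have := lt_length_of_getD_eq_some hγ; omega
  rw [List.prefix_iff_eq_take.mp hx, List.suffix_iff_eq_drop.mp hy] at hagree
  have hxp : (w.take x.length).getD p none = some β := by
    rwa [List.getD_eq_getElem?_getD, List.getElem?_take_of_lt hpx, ← List.getD_eq_getElem?_getD]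
  have hyp : (w.drop (w.length - y.length)).getD p none = some γ := by
    rwa [List.getD_eq_getElem?_getD, List.getElem?_drop, ← List.getD_eq_getElem?_getD, ← hxy,
      Nat.add_comm]
  have := hagree p (Finset.mem_inter.mpr
    ⟨mem_domain_of_getD_eq_some hxp, mem_domain_of_getD_eq_some hyp⟩)
  rw [hxp, hyp] at this
  exact hβγ (Option.some_injective _ this)

end PartialWord

section listPow
variable {α : Type*}

theorem listPow_succ (u : List α) (t : ℕ) : listPow u (t + 1) = u ++ listPow u t := rfl

@[simp]
theorem length_listPow (u : List α) (t : ℕ) : (listPow u t).length = t * u.length := by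
  induction t with
  | zero => simp [listPow]
  | succ t ih => rw [listPow_succ, List.length_append, ih]; ring

theorem getD_listPow (u : List α) (d : α) {t q j : ℕ} (hq : q < t) (hj : j < u.length) :
    (listPow u t).getD (q * u.length + j) d = u.getD j d := by
  induction q generalizing t with
  | zero =>
    obtain ⟨t, rfl⟩ := Nat.exists_eq_add_of_lt hq
    rw [zero_mul, zero_add, zero_add, listPow_succ, List.getD_append _ _ _ _ hj]
  | succ q ih =>
    obtain ⟨t, rfl⟩ := Nat.exists_eq_add_of_lt hq
    rw [show q + 1 + t + 1 = (q + t + 1) + 1 by ring, listPow_succ,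
      List.getD_append_right _ _ _ _ (by nlinarith),
      show (q + 1) * u.length + j - u.length = q * u.length + j by rw [Nat.succ_mul]; omega]
    exact ih (by omega)

end listPow

def wichmannWord {A : Type*} (a b c d : A) (r s : ℕ) : List (Option A) :=
  [some a] ++ List.replicate r (some b) ++ List.replicate r none ++
    listPow ([some a] ++ List.replicate (2 * r) none) r ++ [some b] ++
    listPow (List.replicate (4 * r + 2) none ++ [some c]) s ++
    listPow (List.replicate (2 * r + 1) none ++ [some d]) (r + 1) ++
    List.replicate r (some b)

namespace wichmannWord

open PartialWord

variable {A : Type*} {a b c d : A} {r s : ℕ}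

theorem length_eq :
    (wichmannWord a b c d r s).length =
      (r + 1) * (2 * r + 1) + s * (4 * r + 3) + (r + 1) * (2 * r + 2) + r + 1 := by
  simp only [wichmannWord, List.length_append, List.length_replicate, length_listPow,
    List.length_cons, List.length_nil]
  ring

theorem getD_zero : (wichmannWord a b c d r s).getD 0 none = some a := by
  simp [wichmannWord, List.getD_eq_getElem?_getD]

theorem getD_b_left {j : ℕ} (hj : 1 ≤ j) (hjr : j ≤ r) :
    (wichmannWord a b c d r s).getD j none = some b := by
  rw [wichmannWord]
  repeat rw [List.getD_append _ _ _ _ (by simp; nlinarith)]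
  rw [List.getD_append_right _ _ _ _ (by simp; omega), List.getD_replicate _ (by simp; omega)]

theorem getD_a {m : ℕ} (hm : m ≤ r) :
    (wichmannWord a b c d r s).getD (m * (2 * r + 1)) none = some a := by
  rcases m with _ | m
  · simpa using getD_zero
  rw [wichmannWord]
  repeat rw [List.getD_append _ _ _ _ (by simp; nlinarith)]
  rw [List.getD_append_right _ _ _ _ (by simp; nlinarith),
    show _ - _ = m * ([some a] ++ List.replicate (2 * r) (none : Option A)).length + 0 by
      simp; ring_nf; omega,
    getD_listPow _ _ (by omega) (by simp)]
  rfl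

theorem getD_b_mid : (wichmannWord a b c d r s).getD ((r + 1) * (2 * r + 1)) none = some b := by
  rw [wichmannWord]
  repeat rw [List.getD_append _ _ _ _ (by simp; nlinarith)]
  rw [List.getD_append_right _ _ _ _ (by simp; nlinarith),
    Nat.sub_eq_zero_of_le (by simp; nlinarith)]
  rfl

theorem getD_c {i : ℕ} (hi : 1 ≤ i) (his : i ≤ s) :
    (wichmannWord a b c d r s).getD ((r + 1) * (2 * r + 1) + i * (4 * r + 3)) none
      = some c := by
  obtain ⟨i, rfl⟩ := Nat.exists_eq_add_of_le' hi
  rw [wichmannWord]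
  repeat rw [List.getD_append _ _ _ _ (by simp; nlinarith)]
  rw [List.getD_append_right _ _ _ _ (by simp; nlinarith),
    show _ - _ = i * (List.replicate (4 * r + 2) (none : Option A) ++ [some c]).length
      + (4 * r + 2) by simp; ring_nf; omega,
    getD_listPow _ _ (by omega) (by simp)]
  simp

theorem getD_d {k : ℕ} (hk : 1 ≤ k) (hkr : k ≤ r + 1) :
    (wichmannWord a b c d r s).getD
      ((r + 1) * (2 * r + 1) + s * (4 * r + 3) + k * (2 * r + 2)) none = some d := by
  obtain ⟨k, rfl⟩ := Nat.exists_eq_add_of_le' hk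
  rw [wichmannWord]
  repeat rw [List.getD_append _ _ _ _ (by simp; nlinarith)]
  rw [List.getD_append_right _ _ _ _ (by simp; nlinarith),
    show _ - _ = k * (List.replicate (2 * r + 1) (none : Option A) ++ [some d]).length
      + (2 * r + 1) by simp; ring_nf; omega,
    getD_listPow _ _ (by omega) (by simp)]
  simp

theorem getD_b_right {j : ℕ} (hj : 1 ≤ j) (hjr : j ≤ r) :
    (wichmannWord a b c d r s).getD
      ((r + 1) * (2 * r + 1) + s * (4 * r + 3) + (r + 1) * (2 * r + 2) + j) none = some b := by
  rw [wichmannWord, List.getD_append_right _ _ _ _ (by simp; nlinarith),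
    List.getD_replicate _ (by simp; ring_nf; omega)]

theorem getD_a_or_b_left (a b c d : A) (r s : ℕ) {p : ℕ} (hp : p ≤ r) :
    ∃ γ, (wichmannWord a b c d r s).getD p none = some γ ∧ (γ = a ∨ γ = b) := by
  rcases Nat.eq_zero_or_pos p with rfl | hp0
  · exact ⟨a, getD_zero, .inl rfl⟩
  · exact ⟨b, getD_b_left hp0 hp, .inr rfl⟩

theorem getD_a_or_b_mid (a b c d : A) (r s : ℕ) {m : ℕ} (hm : m ≤ r + 1) :
    ∃ γ, (wichmannWord a b c d r s).getD (m * (2 * r + 1)) none = some γ ∧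
      (γ = a ∨ γ = b) := by
  rcases Nat.lt_or_ge m (r + 1) with hm' | hm'
  · exact ⟨a, getD_a (by omega), .inl rfl⟩
  · obtain rfl : m = r + 1 := by omega
    exact ⟨b, getD_b_mid, .inr rfl⟩

theorem getD_b_or_c (a b c d : A) (r s : ℕ) {i : ℕ} (hi : i ≤ s) :
    ∃ γ, (wichmannWord a b c d r s).getD ((r + 1) * (2 * r + 1) + i * (4 * r + 3)) none
      = some γ ∧ (γ = b ∨ γ = c) := by
  rcases Nat.eq_zero_or_pos i with rfl | hi0
  · exact ⟨b, by simpa using getD_b_mid, .inl rfl⟩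
  · exact ⟨c, getD_c hi0 hi, .inr rfl⟩

theorem getD_d_or_b (a b c d : A) (r s : ℕ) {j : ℕ} (hj : j ≤ r) :
    ∃ γ, (wichmannWord a b c d r s).getD
      ((r + 1) * (2 * r + 1) + s * (4 * r + 3) + (r + 1) * (2 * r + 2) + j) none = some γ ∧
      (γ = d ∨ γ = b) := by
  rcases Nat.eq_zero_or_pos j with rfl | hj0
  · exact ⟨d, by simpa using getD_d (by omega) le_rfl, .inl rfl⟩
  · exact ⟨b, getD_b_right hj0 hj, .inr rfl⟩

theorem shiftConflict_mul (hab : a ≠ b) {m : ℕ} (hm : 1 ≤ m) (hmr : m ≤ r + 1) :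
    ShiftConflict (wichmannWord a b c d r s) (m * (2 * r + 1)) :=
  .of_getD (getD_a (m := r + 1 - m) (by omega)) getD_b_mid hab (by zify [hmr]; ring)

theorem shiftConflict_mul_add_of_lt (hab : a ≠ b) (hbd : b ≠ d) {m ρ : ℕ} (hm : m ≤ r)
    (hρ : r < ρ) (hρ' : ρ < 2 * r + 1) :
    ShiftConflict (wichmannWord a b c d r s) (m * (2 * r + 1) + ρ) := by
  rcases Nat.lt_or_ge m r with hmr | hmr
  · exact .of_getD (getD_b_left (j := 2 * r + 1 - ρ) (by omega) (by omega))
      (getD_a (m := m + 1) hmr) hab.symm (by zify [hρ'.le]; ring)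
  · obtain rfl : r = m := by omega
    exact .of_getD (getD_d (k := 1) le_rfl (by omega))
      (getD_b_right (j := ρ - r) (by omega) (by omega)) hbd.symm (by zify [hρ.le]; ring)

theorem shiftConflict_mul_add_of_le (hac : a ≠ c) (had : a ≠ d) (hbc : b ≠ c) (hbd : b ≠ d)
    (hcd : c ≠ d) {m ρ : ℕ} (hm : 1 ≤ m) (hmr : m ≤ r) (hρ : 1 ≤ ρ) (hρr : ρ ≤ r) :
    ShiftConflict (wichmannWord a b c d r s) (m * (2 * r + 1) + ρ) := by
  rcases lt_trichotomy m ρ with hmρ | rfl | hρm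
  · exact .of_getD (getD_d (k := r + 1 - m) (by omega) (by omega))
      (getD_b_right (j := ρ - m) (by omega) (by omega)) hbd.symm
      (by zify [hmρ.le, hmr.trans (Nat.le_succ r)]; ring)
  · obtain ⟨γ, hγ, hγbc⟩ := getD_b_or_c a b c d r s le_rfl
    exact .of_getD hγ (getD_d hm (by omega)) (by rcases hγbc with rfl | rfl <;> assumption)
      (by ring)
  by_cases hs : m - ρ + 1 ≤ s ∧ m - ρ < ρ
  · exact .of_getD (getD_c (i := s - (m - ρ)) (by omega) (by omega))
      (getD_d (k := 2 * ρ - m) (by omega) (by omega)) hcd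
      (by zify [hρm.le, show m - ρ ≤ s by omega, show m ≤ 2 * ρ by omega]; ring)
  rcases le_or_gt ρ s with hρs | hρs
  · obtain ⟨γ, hγ, hγab⟩ := getD_a_or_b_mid a b c d r s (m := r + 1 + 2 * ρ - m) (by omega)
    exact .of_getD hγ (getD_c hρ hρs) (by rcases hγab with rfl | rfl <;> assumption)
      (by zify [show m ≤ r + 1 + 2 * ρ by omega]; ring)
  · obtain ⟨γ, hγ, hγab⟩ := getD_a_or_b_mid a b c d r s (m := r + 1 + s + ρ - m) (by omega)
    exact .of_getD hγ (getD_d (k := ρ - s) (by omega) (by omega))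
      (by rcases hγab with rfl | rfl <;> assumption)
      (by zify [show m ≤ r + 1 + s + ρ by omega, hρs.le]; ring)

theorem shiftConflict_of_le_mid (hab : a ≠ b) (hac : a ≠ c) (had : a ≠ d) (hbc : b ≠ c)
    (hbd : b ≠ d) (hcd : c ≠ d) {t : ℕ} (ht : r < t) (htB : t ≤ (r + 1) * (2 * r + 1)) :
    ShiftConflict (wichmannWord a b c d r s) t := by
  obtain ⟨m, ρ, rfl, hρ⟩ :=
    Nat.exists_eq_add_mul_add_of_le (n := 2 * r + 1) (by omega) (Nat.zero_le t)
  rw [zero_add] at ht htB ⊢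
  have hm : m ≤ r + 1 := by nlinarith
  rcases Nat.eq_zero_or_pos ρ with rfl | hρ0
  · exact shiftConflict_mul hab (by rcases Nat.eq_zero_or_pos m with rfl | h <;> omega) hm
  have hmr : m ≤ r := by nlinarith
  rcases le_or_gt ρ r with hρr | hρr
  · have hm0 : 1 ≤ m := by rcases Nat.eq_zero_or_pos m with rfl | h <;> omega
    exact shiftConflict_mul_add_of_le hac had hbc hbd hcd hm0 hmr hρ0 hρr
  · exact shiftConflict_mul_add_of_lt hab hbd hmr hρr hρ

theorem shiftConflict_mid_add_mul_add_of_le (hac : a ≠ c) (had : a ≠ d) (hbc : b ≠ c)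
    (hbd : b ≠ d) (hcd : c ≠ d) {i ε : ℕ} (his : i + 1 ≤ s) (hε : 1 ≤ ε)
    (hεr : ε ≤ r) :
    ShiftConflict (wichmannWord a b c d r s) ((r + 1) * (2 * r + 1) + i * (4 * r + 3) + ε) := by
  by_cases h₁ : r + 2 ≤ 2 * ε ∧ i + (r + 1) ≤ s + ε
  · obtain ⟨γ, hγ, hγbc⟩ := getD_b_or_c a b c d r s (i := s + ε - (i + r + 1)) (by omega)
    exact .of_getD hγ (getD_d (k := 2 * ε - (r + 1)) (by omega) (by omega))
      (by rcases hγbc with rfl | rfl <;> assumption)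
      (by zify [show i + r + 1 ≤ s + ε by omega, show r + 1 ≤ 2 * ε by omega]; ring)
  by_cases h₂ : 2 * ε < r + 2 ∧ i + ε ≤ s
  · obtain ⟨γ, hγ, hγab⟩ := getD_a_or_b_mid a b c d r s (m := 2 * ε) (by omega)
    exact .of_getD hγ (getD_c (i := i + ε) (by omega) h₂.2)
      (by rcases hγab with rfl | rfl <;> assumption) (by ring)
  · exact .of_getD (getD_a (m := s + ε - i) (by omega))
      (getD_d (k := ε + i - s) (by omega) (by omega)) had
      (by zify [show i ≤ s + ε by omega, show s ≤ ε + i by omega]; ring)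

theorem shiftConflict_mid_add_mul_add_of_mem_Icc (hac : a ≠ c) (had : a ≠ d) (hbc : b ≠ c)
    (hbd : b ≠ d) (hcd : c ≠ d) {i ε : ℕ} (his : i + 1 ≤ s) (hε : 2 * r + 2 ≤ ε)
    (hεr : ε ≤ 3 * r + 2) :
    ShiftConflict (wichmannWord a b c d r s) ((r + 1) * (2 * r + 1) + i * (4 * r + 3) + ε) := by
  by_cases h₁ : 2 * ε ≤ 5 * r + 4 ∧ i + ε ≤ s + (2 * r + 1)
  · obtain ⟨γ, hγ, hγab⟩ :=
      getD_a_or_b_mid a b c d r s (m := 2 * ε - (4 * r + 3)) (by omega)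
    exact .of_getD hγ (getD_c (i := i + ε - (2 * r + 1)) (by omega) (by omega))
      (by rcases hγab with rfl | rfl <;> assumption)
      (by zify [show 4 * r + 3 ≤ 2 * ε by omega, show 2 * r + 1 ≤ i + ε by omega]; ring)
  by_cases h₂ : 5 * r + 4 < 2 * ε ∧ i + (3 * r + 3) ≤ s + ε
  · obtain ⟨γ, hγ, hγbc⟩ :=
      getD_b_or_c a b c d r s (i := s + ε - (i + 3 * r + 3)) (by omega)
    exact .of_getD hγ (getD_d (k := 2 * ε - (5 * r + 4)) (by omega) (by omega))
      (by rcases hγbc with rfl | rfl <;> assumption)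
      (by zify [show i + 3 * r + 3 ≤ s + ε by omega, show 5 * r + 4 ≤ 2 * ε by omega]; ring)
  · exact .of_getD (getD_a (m := s + ε - (i + 2 * r + 2)) (by omega))
      (getD_d (k := ε + i - (s + 2 * r + 1)) (by omega) (by omega)) had
      (by zify [show i + 2 * r + 2 ≤ s + ε by omega, show s + 2 * r + 1 ≤ ε + i by omega]
          ring)

theorem shiftConflict_mid_add_mul_add_of_lt (hac : a ≠ c) (had : a ≠ d) (hbc : b ≠ c)
    (hbd : b ≠ d) (hcd : c ≠ d) {i ε : ℕ} (his : i + 1 ≤ s) (hε : r < ε)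
    (hεr : ε ≤ 4 * r + 3) :
    ShiftConflict (wichmannWord a b c d r s) ((r + 1) * (2 * r + 1) + i * (4 * r + 3) + ε) := by
  rcases le_or_gt ε (2 * r + 1) with h₁ | h₁
  · obtain ⟨γ, hγ, hγdb⟩ := getD_d_or_b a b c d r s (j := ε - (r + 1)) (by omega)
    exact .of_getD (getD_c (i := s - i) (by omega) (by omega)) hγ
      (by rcases hγdb with rfl | rfl <;> first | exact hcd | exact hbc.symm)
      (by zify [show i ≤ s by omega, show r + 1 ≤ ε by omega]; ring)
  rcases le_or_gt ε (3 * r + 2) with h₂ | h₂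
  · exact shiftConflict_mid_add_mul_add_of_mem_Icc hac had hbc hbd hcd his h₁ h₂
  · obtain ⟨γ, hγ, hγab⟩ := getD_a_or_b_left a b c d r s (p := 4 * r + 3 - ε) (by omega)
    exact .of_getD hγ (getD_c (i := i + 1) (by omega) his)
      (by rcases hγab with rfl | rfl <;> assumption) (by zify [hεr]; ring)

theorem shiftConflict_of_mid_lt (hac : a ≠ c) (had : a ≠ d) (hbc : b ≠ c)
    (hbd : b ≠ d) (hcd : c ≠ d) {t : ℕ} (ht : (r + 1) * (2 * r + 1) < t)
    (htC : t ≤ (r + 1) * (2 * r + 1) + s * (4 * r + 3)) :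
    ShiftConflict (wichmannWord a b c d r s) t := by
  obtain ⟨i, z, rfl, hz⟩ :=
    Nat.exists_eq_add_mul_add_of_le (n := 4 * r + 3) (by omega) (Nat.succ_le_of_lt ht)
  rw [show (r + 1) * (2 * r + 1) + 1 + i * (4 * r + 3) + z
      = (r + 1) * (2 * r + 1) + i * (4 * r + 3) + (z + 1) by ring]
  have his : i + 1 ≤ s := by nlinarith
  rcases le_or_gt (z + 1) r with h | h
  · exact shiftConflict_mid_add_mul_add_of_le hac had hbc hbd hcd his (Nat.le_add_left 1 z) h
  · exact shiftConflict_mid_add_mul_add_of_lt hac had hbc hbd hcd his h hz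

theorem shiftConflict_of_lastC_lt (hab : a ≠ b) (had : a ≠ d) (hbd : b ≠ d) {t : ℕ}
    (ht : (r + 1) * (2 * r + 1) + s * (4 * r + 3) < t)
    (htn : t ≤ (r + 1) * (2 * r + 1) + s * (4 * r + 3) + (r + 1) * (2 * r + 2) + r) :
    ShiftConflict (wichmannWord a b c d r s) t := by
  obtain ⟨k, δ, rfl, hδ⟩ :=
    Nat.exists_eq_add_mul_add_of_le (n := 2 * r + 2) (by omega) ht.le
  have hk : k ≤ r + 1 := by nlinarith
  have hkδ : k = r + 1 → δ ≤ r := by rintro rfl; omega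
  have hkδ₀ : 1 ≤ k + δ := by rcases Nat.eq_zero_or_pos k with rfl | hk₀ <;> omega
  by_cases h₁ : r + 2 ≤ δ
  · exact .of_getD (getD_b_left (j := 2 * r + 2 - δ) (by omega) (by omega))
      (getD_d (k := k + 1) (by omega) (by omega)) hbd (by zify [hδ.le]; ring)
  by_cases h₂ : k + δ ≤ r + 1 ∧ δ ≤ r
  · exact .of_getD (getD_a (m := δ) h₂.2) (getD_d (k := k + δ) (by omega) h₂.1) had (by ring)
  by_cases h₃ : k = 0
  · obtain ⟨rfl, rfl⟩ : k = 0 ∧ δ = r + 1 := ⟨h₃, by omega⟩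
    exact .of_getD getD_b_mid (getD_d (k := r + 1) (by omega) le_rfl) hbd (by ring)
  · exact .of_getD (getD_a (m := r + 1 - k) (by omega))
      (getD_b_right (j := δ + k - (r + 1)) (by omega) (by omega)) hab
      (by zify [hk, show r + 1 ≤ δ + k by omega]; ring)

end wichmannWord

open wichmannWord in
/-- For four distinct letters `a, b, c, d` and all `r, s ∈ ℕ`, the
Wichmann word `W(r,s) = a bʳ ⋄ʳ (a ⋄²ʳ)ʳ b (⋄⁴ʳ⁺²c)ˢ (⋄²ʳ⁺¹d)ʳ⁺¹ bʳ` over the alphabet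
`{a,b,c,d}` is unbordered. -/
theorem wichmannWord_unbordered {A : Type*} (a b c d : A) (hab : a ≠ b) (hac : a ≠ c)
    (had : a ≠ d) (hbc : b ≠ c) (hbd : b ≠ d) (hcd : c ≠ d) (r s : ℕ) :
    PartialWord.Unbordered
      (([some a] ++ List.replicate r (some b) ++ List.replicate r none ++
        listPow ([some a] ++ List.replicate (2 * r) none) r ++ [some b] ++
        listPow (List.replicate (4 * r + 2) none ++ [some c]) s ++
        listPow (List.replicate (2 * r + 1) none ++ [some d]) (r + 1) ++
        List.replicate r (some b) : List (Option A))) := by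
  refine PartialWord.unbordered_of_shiftConflict (w := wichmannWord a b c d r s)
    fun t ht htn => ?_
  rw [length_eq] at htn
  rcases le_or_gt t r with h₁ | h₁
  · exact .of_getD getD_zero (getD_b_left ht h₁) hab (zero_add t)
  rcases le_or_gt t ((r + 1) * (2 * r + 1)) with h₂ | h₂
  · exact shiftConflict_of_le_mid hab hac had hbc hbd hcd h₁ h₂
  rcases le_or_gt t ((r + 1) * (2 * r + 1) + s * (4 * r + 3)) with h₃ | h₃
  · exact shiftConflict_of_mid_lt hac had hbc hbd hcd h₂ h₃
  · exact shiftConflict_of_lastC_lt hab had hbd h₃ (by omega)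
end
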